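/- arXiv:2409.11907 — 6 statements merged into one kernel-verified Lean document; each statement's English description precedes it below -/
import Mathlib

section
/- Let d ≥ 2 and let D = {(A_i^{(1)},…,A_i^{(d)})}_{1≤i≤m} be a strong Bollobás system of d-partitions of [n]. Then ∑_{i=1}^m binom(∑_{r=1}^d |A_i^{(r)}|; |A_i^{(1)}|,…,|A_i^{(d)}|)^{-1} ≤ 1. (In particular, the Hegedüs–Frankl conjectured inequality holds for strong Bollobás systems.) -/
/-!
The weight `1 / multinomial(|a₁|, …, |a_d|)` of a partition `a` with blocks in a ground set `S`
is the probability that a uniformly random ordering of `S` lists the blocks in their order.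
Conditioning on the last element `x` of the ordering: the event survives only when no nonempty
block follows the block of `x`, and then the rest is a random ordering of `S \ {x}` that must
list the blocks of `a` with `x` deleted. Hence `|S| · w(a) ≤ ∑ₓ [x erasable from a] · w(a - x)`.
For fixed `x`, the members of a strong Bollobás system from which `x` is erasable, with `x`
deleted, again form a strong Bollobás system on `S \ {x}`: an element witnessing
`A_i^{(u₁)} ∩ A_j^{(v₂)} ≠ ∅` lies in a block of `A_i` followed by the nonempty `A_i^{(u₂)}`,
so it is not `x`, and symmetrically for the other witness. Induction on `S` finishes.
-/

open Finset Function

namespace StrongBollobas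

variable {α κ ι : Type*}

section Weight

variable [Fintype κ]

def weight (a : κ → Finset α) : ℚ :=
  ((Nat.multinomial univ fun r => (a r).card : ℕ) : ℚ)⁻¹

lemma weight_nonneg (a : κ → Finset α) : 0 ≤ weight a := by
  unfold weight
  positivity

lemma weight_le_one (a : κ → Finset α) : weight a ≤ 1 :=
  inv_le_one_of_one_le₀ <| by exact_mod_cast Nat.multinomial_pos _ _

lemma weight_eq_prod_factorial_div (a : κ → Finset α) :
    weight a = (∏ r, (a r).card.factorial : ℕ) / ((∑ r, (a r).card).factorial : ℕ) := by
  have hspec := Nat.multinomial_spec univ fun r => (a r).card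
  have hpos := Nat.multinomial_pos univ fun r => (a r).card
  rw [weight, ← hspec, Nat.cast_mul]
  field_simp

lemma weight_erase [DecidableEq α] {a : κ → Finset α} (hdisj : Pairwise (Disjoint on a))
    {r : κ} {x : α} (hx : x ∈ a r) :
    weight (fun s => (a s).erase x) = (∑ s, (a s).card : ℕ) / (a r).card * weight a := by
  classical
  have hother : ∀ s ∈ univ.erase r, ((a s).erase x).card = (a s).card := fun s hs =>
    congrArg card <| erase_eq_of_notMem fun hxs =>
      disjoint_left.mp (hdisj (ne_of_mem_erase hs)) hxs hx
  have hr : ((a r).erase x).card + 1 = (a r).card := card_erase_add_one hx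
  have hsum : ∑ s, ((a s).erase x).card + 1 = ∑ s, (a s).card := by
    rw [← add_sum_erase _ _ (mem_univ r), ← add_sum_erase _ _ (mem_univ r), sum_congr rfl hother]
    omega
  have hprod : (a r).card * ∏ s, ((a s).erase x).card.factorial = ∏ s, (a s).card.factorial := by
    rw [← mul_prod_erase _ _ (mem_univ r), ← mul_prod_erase _ _ (mem_univ r),
      prod_congr rfl fun s hs => congrArg Nat.factorial (hother s hs), ← mul_assoc, ← hr,
      Nat.factorial_succ]
  have hcard : ((a r).card : ℚ) ≠ 0 := by exact_mod_cast (card_pos.mpr ⟨x, hx⟩).ne'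
  rw [weight_eq_prod_factorial_div, weight_eq_prod_factorial_div, ← hprod, ← hsum,
    Nat.factorial_succ]
  push_cast
  field_simp

end Weight

section Order

variable [LinearOrder κ]

def Erasable (a : κ → Finset α) (x : α) : Prop :=
  ∀ r s, r < s → x ∈ a r → a s = ∅

lemma erasable_of_forall_notMem {a : κ → Finset α} {x : α} (hx : ∀ r, x ∉ a r) :
    Erasable a x :=
  fun r _ _ hxr => absurd hxr (hx r)

lemma erasable_of_mem_of_forall_lt {a : κ → Finset α} (hdisj : Pairwise (Disjoint on a))
    {r : κ} {x : α} (hx : x ∈ a r) (hlast : ∀ s, r < s → a s = ∅) : Erasable a x := by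
  intro r' s hs hxr'
  obtain rfl : r' = r := by_contra fun hne => disjoint_left.mp (hdisj hne) hxr' hx
  exact hlast s hs

def IsStrongBollobas [DecidableEq α] [LT ι] (I : Finset ι) (A : ι → κ → Finset α) : Prop :=
  ∀ i ∈ I, ∀ j ∈ I, i < j → ∃ u₁ u₂ v₁ v₂ : κ, u₁ < u₂ ∧ v₁ < v₂ ∧
    (A i u₁ ∩ A j v₂).Nonempty ∧ (A i u₂ ∩ A j v₁).Nonempty

lemma IsStrongBollobas.card_le_one [DecidableEq α] [LinearOrder ι] {I : Finset ι}
    {A : ι → κ → Finset α} (hA : IsStrongBollobas I A) (hempty : ∀ i ∈ I, ∀ r, A i r = ∅) :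
    I.card ≤ 1 := by
  refine Finset.card_le_one.mpr fun i hi j hj => by_contra fun hij => ?_
  rcases lt_or_gt_of_ne hij with hlt | hlt
  · obtain ⟨u₁, -, -, v₂, -, -, hne, -⟩ := hA i hi j hj hlt
    simp [hempty i hi u₁] at hne
  · obtain ⟨u₁, -, -, v₂, -, -, hne, -⟩ := hA j hj i hi hlt
    simp [hempty j hj u₁] at hne

end Order

variable [Fintype κ] [LinearOrder κ] [DecidableEq α]

instance (a : κ → Finset α) : DecidablePred (Erasable a) :=
  fun _ => inferInstanceAs (Decidable (∀ r s, r < s → _ → _))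

lemma IsStrongBollobas.filter_erasable_erase [LT ι] {I : Finset ι}
    {A : ι → κ → Finset α} (hA : IsStrongBollobas I A) (x : α) :
    IsStrongBollobas (I.filter fun i => Erasable (A i) x) fun i r => (A i r).erase x := by
  intro i hi j hj hij
  rw [mem_filter] at hi hj
  obtain ⟨u₁, u₂, v₁, v₂, hu, hv, ⟨y, hy⟩, ⟨z, hz⟩⟩ := hA i hi.1 j hj.1 hij
  rw [mem_inter] at hy hz
  have hyx : y ≠ x := by
    rintro rfl
    simpa [hi.2 u₁ u₂ hu hy.1] using hz.1
  have hzx : z ≠ x := by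
    rintro rfl
    simpa [hj.2 v₁ v₂ hv hz.2] using hy.2
  exact ⟨u₁, u₂, v₁, v₂, hu, hv, ⟨y, by simp [hy, hyx]⟩, ⟨z, by simp [hz, hzx]⟩⟩

lemma card_biUnion_mul_weight_le {a : κ → Finset α} (hdisj : Pairwise (Disjoint on a)) :
    ((univ.biUnion a).card : ℚ) * weight a ≤
      ∑ x ∈ univ.biUnion a, if Erasable a x then weight (fun s => (a s).erase x) else 0 := by
  by_cases hempty : ∀ r, a r = ∅
  · have hU : univ.biUnion a = ∅ := by ext; simp [hempty]
    simp [hU]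
  obtain ⟨r, hr, hlast⟩ : ∃ r, (a r).Nonempty ∧ ∀ s, r < s → a s = ∅ := by
    push Not at hempty
    obtain ⟨r₀, hr₀⟩ := hempty
    obtain ⟨r, hr, hmax⟩ := (univ.filter fun r => (a r).Nonempty).exists_max_image id
      ⟨r₀, mem_filter.mpr ⟨mem_univ _, hr₀⟩⟩
    refine ⟨r, (mem_filter.mp hr).2, fun s hs => by_contra fun hne => ?_⟩
    exact (hmax s (mem_filter.mpr ⟨mem_univ _, nonempty_iff_ne_empty.mpr hne⟩)).not_gt hs
  have hcard : ((a r).card : ℚ) ≠ 0 := by exact_mod_cast hr.card_pos.ne'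
  rw [card_biUnion (hdisj.set_pairwise _)]
  calc ((∑ s, (a s).card : ℕ) : ℚ) * weight a
      = ∑ _x ∈ a r, ((∑ s, (a s).card : ℕ) : ℚ) / (a r).card * weight a := by
        rw [sum_const, nsmul_eq_mul]
        field_simp
    _ = ∑ x ∈ a r, if Erasable a x then weight (fun s => (a s).erase x) else 0 :=
        sum_congr rfl fun x hx => by
          rw [if_pos (erasable_of_mem_of_forall_lt hdisj hx hlast), weight_erase hdisj hx]
    _ ≤ _ := sum_le_sum_of_subset_of_nonneg (subset_biUnion_of_mem a (mem_univ r))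
        fun x _ _ => by split_ifs <;> simp [weight_nonneg]

lemma card_mul_weight_le {S : Finset α} {a : κ → Finset α} (hS : ∀ r, a r ⊆ S)
    (hdisj : Pairwise (Disjoint on a)) :
    (S.card : ℚ) * weight a ≤
      ∑ x ∈ S, if Erasable a x then weight (fun s => (a s).erase x) else 0 := by
  have hU : univ.biUnion a ⊆ S := biUnion_subset.mpr fun r _ => hS r
  have houtside : ∀ x ∈ S \ univ.biUnion a,
      (if Erasable a x then weight (fun s => (a s).erase x) else 0) = weight a := by
    intro x hx
    have hxa : ∀ r, x ∉ a r := fun r hxr =>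
      (mem_sdiff.mp hx).2 (mem_biUnion.mpr ⟨r, mem_univ r, hxr⟩)
    rw [if_pos (erasable_of_forall_notMem hxa)]
    exact congrArg weight (funext fun s => erase_eq_of_notMem (hxa s))
  rw [← sum_sdiff hU, sum_congr rfl houtside, sum_const, nsmul_eq_mul,
    ← card_sdiff_add_card_eq_card hU, Nat.cast_add, add_mul]
  exact add_le_add_right (card_biUnion_mul_weight_le hdisj) _

theorem sum_weight_le_one [LinearOrder ι] (S : Finset α) (I : Finset ι) (A : ι → κ → Finset α)
    (hS : ∀ i ∈ I, ∀ r, A i r ⊆ S) (hdisj : ∀ i ∈ I, Pairwise (Disjoint on A i))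
    (hA : IsStrongBollobas I A) :
    ∑ i ∈ I, weight (A i) ≤ 1 := by
  induction S using Finset.strongInduction generalizing I A with
  | H S ih =>
  rcases S.eq_empty_or_nonempty with rfl | hSne
  · have hI := hA.card_le_one fun i hi r => subset_empty.mp (hS i hi r)
    calc ∑ i ∈ I, weight (A i) ≤ ∑ _i ∈ I, (1 : ℚ) := sum_le_sum fun i _ => weight_le_one _
      _ ≤ 1 := by simpa using hI
  have herase : ∀ x ∈ S, ∑ i ∈ I.filter fun i => Erasable (A i) x,
      weight (fun r => (A i r).erase x) ≤ 1 := fun x hx =>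
    ih (S.erase x) (erase_ssubset hx) _ _
      (fun i hi r => erase_subset_erase x (hS i (mem_filter.mp hi).1 r))
      (fun i hi _ _ hrs => (hdisj i (mem_filter.mp hi).1 hrs).mono (erase_subset _ _)
        (erase_subset _ _))
      (hA.filter_erasable_erase x)
  have hcard : (0 : ℚ) < S.card := by exact_mod_cast hSne.card_pos
  refine le_of_mul_le_mul_left ?_ hcard
  calc (S.card : ℚ) * ∑ i ∈ I, weight (A i)
      ≤ ∑ i ∈ I, ∑ x ∈ S, if Erasable (A i) x then weight (fun r => (A i r).erase x) else 0 := by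
        rw [mul_sum]
        exact sum_le_sum fun i hi => card_mul_weight_le (hS i hi) (hdisj i hi)
    _ = ∑ x ∈ S, ∑ i ∈ I.filter fun i => Erasable (A i) x,
          weight (fun r => (A i r).erase x) := by
        rw [sum_comm]
        simp only [sum_filter]
    _ ≤ ∑ _x ∈ S, 1 := sum_le_sum herase
    _ = S.card * 1 := by simp

end StrongBollobas

theorem strong_bollobas_weighted_bound_general (d m : ℕ)
    (A : Fin m → Fin d → Finset ℕ)
    (hAdisj : ∀ i, ∀ p q : Fin d, p ≠ q → Disjoint (A i p) (A i q))
    (hstrong : ∀ i j : Fin m, i < j →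
      ∃ u₁ u₂ v₁ v₂ : Fin d, u₁ < u₂ ∧ v₁ < v₂ ∧
        ((A i u₁) ∩ (A j v₂)).Nonempty ∧ ((A i u₂) ∩ (A j v₁)).Nonempty) :
    ∑ i : Fin m,
        ((Nat.multinomial Finset.univ fun r : Fin d => (A i r).card : ℕ) : ℚ)⁻¹
      ≤ 1 :=
  StrongBollobas.sum_weight_le_one (univ.biUnion fun i => univ.biUnion (A i)) univ A
    (fun i _ r => (subset_biUnion_of_mem (A i) (mem_univ r)).trans
      (subset_biUnion_of_mem (fun i => univ.biUnion (A i)) (mem_univ i)))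
    (fun i _ => hAdisj i) (fun i _ j _ => hstrong i j)

/-- **Theorem (the Hegedüs–Frankl conjecture holds for strong Bollobás systems).**
If `{(A_i^{(1)}, …, A_i^{(d)})}_{1 ≤ i ≤ m}` is a strong Bollobás system of
`d`-partitions of `[n]` with `d ≥ 2`, then
`∑_i multinomial(|A_i^{(1)}|, …, |A_i^{(d)}|)⁻¹ ≤ 1`. -/
theorem strong_bollobas_weighted_bound (n d m : ℕ) (hd : 2 ≤ d)
    (A : Fin m → Fin d → Finset ℕ)
    (hAsub : ∀ i r, A i r ⊆ Finset.Icc 1 n)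
    (hAdisj : ∀ i, ∀ p q : Fin d, p ≠ q → Disjoint (A i p) (A i q))
    (hstrong : ∀ i j : Fin m, i < j →
      ∃ u₁ u₂ v₁ v₂ : Fin d, u₁ < u₂ ∧ v₁ < v₂ ∧
        ((A i u₁) ∩ (A j v₂)).Nonempty ∧ ((A i u₂) ∩ (A j v₁)).Nonempty) :
    ∑ i : Fin m,
        ((Nat.multinomial Finset.univ fun r : Fin d => (A i r).card : ℕ) : ℚ)⁻¹
      ≤ 1 :=
  strong_bollobas_weighted_bound_general d m A hAdisj hstrong
end

section
/- Let n ≥ 2 and let {σ_1,…,σ_{n!}} be the set of all permutations of [n]. For i ∈ [n!] and r ∈ [n], set A_i^{(r)} = {σ_i(r)}. Then the family {(A_i^{(1)},…,A_i^{(n)})}_{1≤i≤n!} is a strong Bollobás system of n-partitions of [n], and ∑_{i=1}^{n!} binom(∑_{r=1}^n |A_i^{(r)}|; |A_i^{(1)}|,…,|A_i^{(n)}|)^{-1} = 1; hence the upper bound 1 in the inequality for strong Bollobás systems is tight. -/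
/-- **Theorem (tightness for strong Bollobás systems).** For `n ≥ 2`, the family
indexed by all permutations `σ` of `[n]` with `A_σ^{(r)} = {σ(r)}` is a strong
Bollobás system of `n`-partitions of `[n]`, and its weighted sum equals `1`;
hence the bound `1` for strong Bollobás systems is tight. -/
theorem strong_bollobas_tight (n : ℕ) (hn : 2 ≤ n) :
    (∀ σ : Equiv.Perm (Fin n), ∀ r : Fin n,
      ({(σ r : ℕ) + 1} : Finset ℕ) ⊆ Finset.Icc 1 n) ∧
    (∀ σ : Equiv.Perm (Fin n), ∀ p q : Fin n, p ≠ q →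
      Disjoint ({(σ p : ℕ) + 1} : Finset ℕ) ({(σ q : ℕ) + 1} : Finset ℕ)) ∧
    (∀ σ τ : Equiv.Perm (Fin n), σ ≠ τ →
      ∃ u₁ u₂ v₁ v₂ : Fin n, u₁ < u₂ ∧ v₁ < v₂ ∧
        (({(σ u₁ : ℕ) + 1} : Finset ℕ) ∩ ({(τ v₂ : ℕ) + 1} : Finset ℕ)).Nonempty ∧
        (({(σ u₂ : ℕ) + 1} : Finset ℕ) ∩ ({(τ v₁ : ℕ) + 1} : Finset ℕ)).Nonempty) ∧
    ∑ σ : Equiv.Perm (Fin n),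
        ((Nat.multinomial Finset.univ
          fun r : Fin n => (({(σ r : ℕ) + 1} : Finset ℕ)).card : ℕ) : ℚ)⁻¹ = 1 := by
  refine ⟨?_, ?_, ?_, ?_⟩
  · intro σ r x hx
    simp only [Finset.mem_singleton] at hx
    subst hx
    have := (σ r).is_lt
    simp only [Finset.mem_Icc]
    omega
  · intro σ p q hpq
    rw [Finset.disjoint_singleton_left, Finset.mem_singleton]
    exact fun h => hpq (σ.injective (Fin.ext (by omega)))
  · intro σ τ hστ
    set π : Equiv.Perm (Fin n) := σ.trans τ.symm with hπ
    have hπapp : ∀ x, τ (π x) = σ x := by intro x; simp [hπ]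
    have hπne : (⇑π : Fin n → Fin n) ≠ id := by
      intro h
      apply hστ
      ext x
      have : π x = x := congrFun h x
      have := hπapp x
      rw [‹π x = x›] at this
      rw [← this]
    have : ¬ StrictMono (π : Fin n → Fin n) := by
      intro hmono
      apply hπne
      haveI : WellFoundedLT (Fin n) := inferInstance
      apply (hmono.range_inj strictMono_id).mp
      simp [Set.range_eq_univ.mpr π.surjective, Set.range_id]
    simp only [StrictMono, not_forall] at this
    obtain ⟨u₁, u₂, h12, hnot⟩ := this
    have hlt : π u₂ < π u₁ :=
      lt_of_le_of_ne (not_lt.mp hnot) (fun h => (h12.ne (π.injective h.symm)).elim)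
    refine ⟨u₁, u₂, π u₂, π u₁, h12, hlt, ?_, ?_⟩
    · exact ⟨(σ u₁ : ℕ) + 1, by simp [hπapp u₁]⟩
    · exact ⟨(σ u₂ : ℕ) + 1, by simp [hπapp u₂]⟩
  · have hcard : ∀ σ : Equiv.Perm (Fin n),
        (Nat.multinomial Finset.univ
          fun r : Fin n => (({(σ r : ℕ) + 1} : Finset ℕ)).card) = n.factorial := by
      intro σ
      simp [Nat.multinomial]
    simp only [hcard]
    rw [Finset.sum_const, Finset.card_univ, Fintype.card_perm, Fintype.card_fin,
      nsmul_eq_mul, mul_inv_cancel₀]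
    positivity
end

section
/- Let d ≥ 2 and suppose [n] is the disjoint union of sets X_1,…,X_e. Let D = {(A_i^{(1)},…,A_i^{(d)})}_{1≤i≤m} be a symmetric Bollobás system of d-partitions of [n]. Let s_k = |X_k ∩ (⋃_{i=1}^m ⋃_{r=1}^d A_i^{(r)})| for k ∈ [e]. Then ∑_{i=1}^m ( ∏_{k=1}^e binom(∑_{r=1}^d |A_i^{(r)} ∩ X_k|; |A_i^{(1)} ∩ X_k|,…,|A_i^{(d)} ∩ X_k|) )^{-1} ≤ min_{l∈[e]} ( ∏_{k=1}^e binom(s_k + d - 1, d - 1) ) / binom(s_l + d - 1, d - 1). -/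
/-!
Split the support into the blocks `Y_k = X_k ∩ ⋃ A_i^{(r)}` and, in each block, place the points
of `Y_k` uniformly at random among `s_k + d - 1` positions; the `d - 1` unused positions act as
bars.
For the `i`-th partition consider the event that, in block `l`, its parts appear in the order
`1, …, d` and that, in every other block, each point of part `r` has exactly `r - 1` bars below it.
These events have probability at least `1 / multinomial` in block `l` and
`1 / (multinomial · C(s_k + d - 1, d - 1))` in the other blocks, and the symmetric Bollobás
condition makes the product events of two different partitions disjoint: a point lying in parts
`p ≠ q` of the two partitions cannot be in a block `k ≠ l`, and two such points swapped between
the partitions cannot both lie in block `l`. Summing probabilities gives the bound for each `l`.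
-/

open Finset
open scoped Function

namespace SymmetricBollobas

section Counting

theorem sum_prod_card_le_prod_card {ι κ : Type*} [Fintype κ] [DecidableEq κ] {Ω : κ → Type*}
    [∀ k, Fintype (Ω k)] [∀ k, DecidableEq (Ω k)] (s : Finset ι) (E : ι → ∀ k, Finset (Ω k))
    (hE : (s : Set ι).PairwiseDisjoint fun i => Fintype.piFinset (E i)) :
    ∑ i ∈ s, ∏ k, #(E i k) ≤ ∏ k, Fintype.card (Ω k) := by
  simp_rw [← Fintype.card_piFinset, ← card_biUnion hE, ← Fintype.card_pi]
  exact card_le_univ _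

theorem sum_inv_prod_le_prod_of_le_mul {ι κ K : Type*} [Fintype κ] [Field K] [LinearOrder K]
    [IsStrictOrderedRing K] (s : Finset ι) (N b : κ → ℕ) (a x : ι → κ → ℕ) (hN : ∀ k, 0 < N k)
    (hbound : ∀ i ∈ s, ∀ k, N k ≤ a i k * b k * x i k)
    (hsum : ∑ i ∈ s, ∏ k, x i k ≤ ∏ k, N k) :
    ∑ i ∈ s, (∏ k, (a i k : K))⁻¹ ≤ ∏ k, (b k : K) := by
  have hP : (0 : K) < ∏ k, (N k : K) := prod_pos fun k _ => by exact_mod_cast hN k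
  have hterm : ∀ i ∈ s,
      (∏ k, (a i k : K))⁻¹ ≤ (∏ k, (b k : K)) / (∏ k, (N k : K)) * ∏ k, (x i k : K) := by
    intro i hi
    have ha : (0 : K) < ∏ k, (a i k : K) := prod_pos fun k _ => by
      have := hbound i hi k; have := hN k
      exact_mod_cast Nat.pos_of_ne_zero fun h => by simp_all
    have hprod : ∏ k, N k ≤ (∏ k, a i k) * ((∏ k, b k) * ∏ k, x i k) := by
      rw [← prod_mul_distrib, ← prod_mul_distrib]
      exact prod_le_prod' fun k _ => (hbound i hi k).trans_eq (mul_assoc _ _ _)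
    rw [div_mul_eq_mul_div, le_div_iff₀ hP, inv_mul_le_iff₀ ha]
    exact_mod_cast hprod
  calc ∑ i ∈ s, (∏ k, (a i k : K))⁻¹
      ≤ ∑ i ∈ s, (∏ k, (b k : K)) / (∏ k, (N k : K)) * ∏ k, (x i k : K) := sum_le_sum hterm
    _ = (∏ k, (b k : K)) / (∏ k, (N k : K)) * ((∑ i ∈ s, ∏ k, x i k : ℕ) : K) := by
      rw [← mul_sum]; push_cast; rfl
    _ ≤ (∏ k, (b k : K)) / (∏ k, (N k : K)) * ∏ k, (N k : K) := by
      gcongr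
      exact_mod_cast hsum
    _ = ∏ k, (b k : K) := div_mul_cancel₀ _ hP.ne'

theorem sum_mul_swap_add {α M : Type*} [Fintype α] [DecidableEq α] [CommSemiring M]
    (w F : α → M) {y z : α} (hyz : y ≠ z) :
    ∑ t, w t * F (Equiv.swap y z t) + (w y * F y + w z * F z) =
      ∑ t, w t * F t + (w y * F z + w z * F y) := by
  have hsplit : ∀ G : α → M,
      ∑ t, w t * G t = ∑ t ∈ ({y, z} : Finset α)ᶜ, w t * G t + (w y * G y + w z * G z) :=
    fun G => by rw [← sum_compl_add_sum {y, z}, sum_pair hyz]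
  have hrest : ∑ t ∈ ({y, z} : Finset α)ᶜ, w t * F (Equiv.swap y z t) =
      ∑ t ∈ ({y, z} : Finset α)ᶜ, w t * F t := by
    refine sum_congr rfl fun t ht => ?_
    simp only [mem_compl, mem_insert, mem_singleton, not_or] at ht
    rw [Equiv.swap_apply_of_ne_of_ne ht.1 ht.2]
  rw [hsplit (fun t => F (Equiv.swap y z t)), hsplit F, hrest, Equiv.swap_apply_left,
    Equiv.swap_apply_right]
  ring

end Counting

section ColorSorted

/-- `c` is a partial colouring by `Fin d`; points coloured `none` are unconstrained. -/
def IsColorSorted {α β : Type*} [LT β] {d : ℕ} (c : α → Option (Fin d)) (f : α → β) : Prop :=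
  ∀ ⦃y z : α⦄ ⦃p q : Fin d⦄, c y = some p → c z = some q → p < q → f y < f z

instance {α β : Type*} [Fintype α] [LT β] [DecidableLT β] {d : ℕ} (c : α → Option (Fin d))
    (f : α → β) : Decidable (IsColorSorted c f) := by
  unfold IsColorSorted; infer_instance

theorem IsColorSorted.not_lt_of_swap {α β : Type*} [Preorder β] {d : ℕ}
    {c c' : α → Option (Fin d)} {f : α → β} (hc : IsColorSorted c f) (hc' : IsColorSorted c' f)
    {x y : α} {p q : Fin d} (hx : c x = some p) (hx' : c' x = some q) (hy : c y = some q)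
    (hy' : c' y = some p) : ¬p < q :=
  fun hpq => (hc hx hy hpq).not_gt (hc' hy' hx' hpq)

variable {α : Type*} [Fintype α] [DecidableEq α] {d : ℕ} (c : α → Option (Fin d))

/-- A rearrangement argument: a permutation maximising `∑ colour(t) · f (π t)` sorts `f`,
since exchanging the images of an inverted pair of coloured points increases the sum. -/
theorem exists_perm_isColorSorted {N : ℕ} (f : α ↪ Fin N) :
    ∃ π : Equiv.Perm α, (Option.isSome ∘ c) ∘ π = Option.isSome ∘ c ∧
      IsColorSorted c (f ∘ π) := by
  let w : α → ℕ := fun y => (c y).elim 0 Fin.val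
  let G := univ.filter fun π : Equiv.Perm α => (Option.isSome ∘ c) ∘ π = Option.isSome ∘ c
  obtain ⟨π, hπ, hmax⟩ := G.exists_max_image (fun π => ∑ t, w t * (f (π t) : ℕ)) ⟨1, by simp [G]⟩
  refine ⟨π, (mem_filter.1 hπ).2, fun y z p q hy hz hpq => ?_⟩
  by_contra hunsorted
  have hyz : y ≠ z := by rintro rfl; simp_all
  have hlt : (f (π z) : ℕ) < f (π y) :=
    (not_lt.1 hunsorted).lt_of_ne fun h => hyz (π.injective (f.injective h)).symm
  have hswap : π * Equiv.swap y z ∈ G := by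
    refine mem_filter.2 ⟨mem_univ _, funext fun t => ?_⟩
    have hsome : (c (Equiv.swap y z t)).isSome = (c t).isSome := by
      rcases eq_or_ne t y with rfl | hty
      · simp [hy, hz]
      rcases eq_or_ne t z with rfl | htz
      · simp [hy, hz]
      rw [Equiv.swap_apply_of_ne_of_ne hty htz]
    simpa [hsome] using congrFun (mem_filter.1 hπ).2 (Equiv.swap y z t)
  have hgain := sum_mul_swap_add w (fun t => (f (π t) : ℕ)) hyz
  have hle := hmax _ hswap
  simp only [Equiv.Perm.coe_mul, Function.comp_apply] at hle
  simp only [w, hy, hz, Option.elim_some] at hgain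
  have hpq' : (p : ℕ) < q := hpq
  nlinarith

theorem card_stabilizer_isSome_eq_multinomial_mul :
    #{π : Equiv.Perm α | (Option.isSome ∘ c) ∘ π = Option.isSome ∘ c} =
      Nat.multinomial univ (fun r => #{y | c y = some r}) * #{π : Equiv.Perm α | c ∘ π = c} := by
  rw [← Fintype.card_subtype, ← Fintype.card_subtype, DomMulAct.stabilizer_card,
    DomMulAct.stabilizer_card, Fintype.prod_bool, Fintype.prod_option]
  simp only [Fintype.card_subtype, Function.comp_apply]
  have hsome : #{y | (c y).isSome = true} = ∑ r, #{y | c y = some r} := by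
    rw [card_eq_sum_card_fiberwise (f := c) (t := univ.map Function.Embedding.some), sum_map]
    · refine sum_congr rfl fun r _ => ?_
      rw [filter_filter]
      exact congrArg card (filter_congr fun y _ => by simp +contextual)
    · intro y hy
      obtain ⟨r, hr⟩ := Option.isSome_iff_exists.1 (mem_filter.1 hy).2
      simp [hr]
  have hnone : #{y | (c y).isSome = false} = #{y | c y = none} := by simp
  rw [hsome, hnone, ← Nat.multinomial_spec]
  ring

/-- Double count: `(f, τ) ↦ (f ∘ π_f ∘ τ, π_f ∘ τ)`, where `π_f` sorts `f` and `τ` preserves `c`,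
is injective, and the two stabilisers involved differ in size by the multinomial factor. -/
theorem card_embedding_le_multinomial_mul_card_isColorSorted (N : ℕ) :
    Fintype.card (α ↪ Fin N) ≤
      Nat.multinomial univ (fun r => #{y | c y = some r}) *
        #{f : α ↪ Fin N | IsColorSorted c f} := by
  set G := univ.filter fun π : Equiv.Perm α => (Option.isSome ∘ c) ∘ π = Option.isSome ∘ c
  set H := univ.filter fun π : Equiv.Perm α => c ∘ π = c
  choose π hπG hπsort using exists_perm_isColorSorted c (N := N)
  have hcount : Fintype.card (α ↪ Fin N) * #H ≤ #{f : α ↪ Fin N | IsColorSorted c f} * #G := by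
    rw [← card_univ, ← card_product, ← card_product]
    refine card_le_card_of_injOn
      (fun fτ => ((π fτ.1 * fτ.2).toEmbedding.trans fτ.1, π fτ.1 * fτ.2)) ?_ ?_
    · rintro ⟨f, τ⟩ hτ
      replace hτ : c ∘ τ = c := by simpa [H] using hτ
      simp only [coe_product, coe_filter, Set.mem_prod, Set.mem_ofPred_eq, mem_univ, true_and, G]
      constructor
      · intro y z p q hy hz hpq
        exact hπsort f ((congrFun hτ y).trans hy) ((congrFun hτ z).trans hz) hpq
      · rw [Equiv.Perm.coe_mul, ← Function.comp_assoc, hπG f, Function.comp_assoc, hτ]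
    · rintro ⟨f, τ⟩ - ⟨f', τ'⟩ - h
      obtain ⟨hg, hρ⟩ := Prod.mk.injEq _ _ _ _ ▸ h
      obtain rfl : f = f' := by
        ext y
        obtain ⟨x, rfl⟩ := (π f * τ).surjective y
        simpa [hρ] using congrArg (fun g : α ↪ Fin N => (g x : ℕ)) hg
      simpa using hρ
  have hH : 0 < #H := card_pos.2 ⟨1, by simp [H]⟩
  rw [card_stabilizer_isSome_eq_multinomial_mul] at hcount
  nlinarith

end ColorSorted

section BarSeparated

variable {α : Type*} [Fintype α] {d : ℕ} (c : α → Option (Fin d))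

/-- The `f y - #{z | f z < f y}` values below `f y` that `f` skips are read as bars:
a point of colour `r` must have exactly `r` bars below it. -/
def IsBarSeparated {N : ℕ} (f : α ↪ Fin N) : Prop :=
  ∀ ⦃y : α⦄ ⦃r : Fin d⦄, c y = some r → (f y : ℕ) = #{z | f z < f y} + r

instance {N : ℕ} (f : α ↪ Fin N) : Decidable (IsBarSeparated c f) := by
  unfold IsBarSeparated; infer_instance

theorem IsBarSeparated.eq_of_eq_some {N : ℕ} {c c' : α → Option (Fin d)} {f : α ↪ Fin N}
    (hc : IsBarSeparated c f) (hc' : IsBarSeparated c' f) {x : α} {p q : Fin d}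
    (hx : c x = some p) (hx' : c' x = some q) : p = q :=
  Fin.ext (by have := hc hx; have := hc' hx'; omega)

theorem card_filter_apply_lt_eq (g : α ↪ Fin (Fintype.card α)) (y : α) :
    #{z | g z < g y} = g y := by
  have hg : Function.Bijective g :=
    (Fintype.bijective_iff_injective_and_card g).2 ⟨g.injective, by simp⟩
  rw [card_equiv (Equiv.ofBijective g hg) (t := Iio (g y)) (by simp), Fin.card_Iio]

def maxColorUpTo {N : ℕ} (g : α → Fin N) (y : α) : ℕ :=
  ({z | g z ≤ g y} : Finset α).sup fun z => (c z).elim 0 Fin.val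

variable {c}

theorem maxColorUpTo_mono {N : ℕ} {g : α → Fin N} {y z : α} (h : g y ≤ g z) :
    maxColorUpTo c g y ≤ maxColorUpTo c g z :=
  sup_mono fun t ht => by simp only [mem_filter, mem_univ, true_and] at ht ⊢; exact ht.trans h

theorem maxColorUpTo_le_pred {N : ℕ} (g : α → Fin N) (y : α) : maxColorUpTo c g y ≤ d - 1 :=
  Finset.sup_le fun z _ => by cases c z <;> simp; omega

theorem maxColorUpTo_eq_of_isColorSorted {N : ℕ} {g : α → Fin N} (hg : IsColorSorted c g)
    {y : α} {p : Fin d} (hy : c y = some p) : maxColorUpTo c g y = p := by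
  refine le_antisymm (Finset.sup_le fun z hz => ?_) ?_
  · simp only [mem_filter, mem_univ, true_and] at hz
    rcases hcz : c z with _ | q
    · simp
    · simpa using not_lt.1 fun hpq => (hg hy hcz hpq).not_ge hz
  · calc (p : ℕ) = (c y).elim 0 Fin.val := by simp [hy]
      _ ≤ maxColorUpTo c g y := le_sup (f := fun z => (c z).elim 0 Fin.val) (by simp)

theorem add_maxColorUpTo_lt_iff {N : ℕ} {g : α → Fin N} {y z : α} :
    (g y : ℕ) + maxColorUpTo c g y < g z + maxColorUpTo c g z ↔ g y < g z := by
  constructor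
  · intro h
    by_contra hzy
    have := maxColorUpTo_mono (c := c) (not_lt.1 hzy)
    have : (g z : ℕ) ≤ g y := not_lt.1 hzy
    omega
  · intro h
    have := maxColorUpTo_mono (c := c) h.le
    have : (g y : ℕ) < g z := h
    omega

variable (c)

def insertBars (g : α ↪ Fin (Fintype.card α)) : α ↪ Fin (Fintype.card α + (d - 1)) where
  toFun y := ⟨g y + maxColorUpTo c g y, by have := maxColorUpTo_le_pred (c := c) g y; omega⟩
  inj' y z h := by
    have h' : (g y : ℕ) + maxColorUpTo c g y = g z + maxColorUpTo c g z := congrArg Fin.val h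
    refine g.injective (le_antisymm ?_ ?_) <;> refine not_lt.1 fun hlt => ?_
    · exact (add_maxColorUpTo_lt_iff.2 hlt).ne h'.symm
    · exact (add_maxColorUpTo_lt_iff.2 hlt).ne h'

theorem card_filter_insertBars_lt (g : α ↪ Fin (Fintype.card α)) (y : α) :
    #{z | insertBars c g z < insertBars c g y} = g y := by
  rw [← card_filter_apply_lt_eq g y]
  exact congrArg card (filter_congr fun z _ => add_maxColorUpTo_lt_iff)

theorem card_isColorSorted_le_card_isBarSeparated :
    #{g : α ↪ Fin (Fintype.card α) | IsColorSorted c g} ≤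
      #{f : α ↪ Fin (Fintype.card α + (d - 1)) | IsBarSeparated c f} := by
  refine card_le_card_of_injOn (insertBars c) (fun g hg => ?_) fun g _ g' _ h => ?_
  · simp only [coe_filter, mem_univ, true_and, Set.mem_ofPred_eq] at hg ⊢
    intro y r hy
    rw [card_filter_insertBars_lt]
    change (g y : ℕ) + maxColorUpTo c g y = g y + r
    rw [maxColorUpTo_eq_of_isColorSorted hg hy]
  · ext y
    rw [← card_filter_insertBars_lt c g y, ← card_filter_insertBars_lt c g' y, h]

theorem card_embedding_le_multinomial_mul_choose_mul_card_isBarSeparated [DecidableEq α] :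
    Fintype.card (α ↪ Fin (Fintype.card α + (d - 1))) ≤
      Nat.multinomial univ (fun r => #{y | c y = some r}) *
        (Fintype.card α + (d - 1)).choose (d - 1) *
          #{f : α ↪ Fin (Fintype.card α + (d - 1)) | IsBarSeparated c f} := by
  have hsorted := card_embedding_le_multinomial_mul_card_isColorSorted c (Fintype.card α)
  rw [Fintype.card_embedding_eq, Fintype.card_fin, Nat.descFactorial_self] at hsorted
  rw [Fintype.card_embedding_eq, Fintype.card_fin, Nat.descFactorial_eq_factorial_mul_choose,
    Nat.choose_symm_add]
  calc (Fintype.card α).factorial * (Fintype.card α + (d - 1)).choose (d - 1)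
      ≤ Nat.multinomial univ (fun r => #{y | c y = some r}) *
          #{g : α ↪ Fin (Fintype.card α) | IsColorSorted c g} *
            (Fintype.card α + (d - 1)).choose (d - 1) := Nat.mul_le_mul_right _ hsorted
    _ ≤ _ := by
      rw [mul_right_comm]
      exact Nat.mul_le_mul_left _ (card_isColorSorted_le_card_isBarSeparated c)

end BarSeparated

section Bollobas

variable {γ : Type*} [DecidableEq γ] {d m : ℕ}

noncomputable def partColor (B : Fin d → Finset γ) (y : γ) : Option (Fin d) :=
  if h : ∃ r, y ∈ B r then some h.choose else none

theorem partColor_eq_some_iff {B : Fin d → Finset γ} (hB : Pairwise (Disjoint on B)) {y : γ}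
    {r : Fin d} : partColor B y = some r ↔ y ∈ B r := by
  unfold partColor
  split_ifs with h
  · refine ⟨fun hr => Option.some_injective _ hr ▸ h.choose_spec, fun hy => ?_⟩
    by_contra hne
    exact disjoint_left.1 (hB fun he => hne (congrArg some he)) h.choose_spec hy
  · simpa using fun hy => h ⟨r, hy⟩

theorem card_filter_partColor_eq_some {B : Fin d → Finset γ} (hB : Pairwise (Disjoint on B))
    (Y : Finset γ) (r : Fin d) : #{y : Y | partColor B y = some r} = #(B r ∩ Y) := by
  refine card_bij (fun y _ => ↑y) (fun y hy => ?_) (fun y _ z _ => Subtype.ext) fun x hx => ?_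
  · exact mem_inter.2 ⟨(partColor_eq_some_iff hB).1 (mem_filter.1 hy).2, y.2⟩
  · obtain ⟨hxB, hxY⟩ := mem_inter.1 hx
    exact ⟨⟨x, hxY⟩, mem_filter.2 ⟨mem_univ _, (partColor_eq_some_iff hB).2 hxB⟩, rfl⟩

def support (A : Fin m → Fin d → Finset γ) : Finset γ := univ.biUnion fun i => univ.biUnion (A i)

theorem subset_support (A : Fin m → Fin d → Finset γ) (i : Fin m) (r : Fin d) :
    A i r ⊆ support A := fun _ hx =>
  mem_biUnion.2 ⟨i, mem_univ _, mem_biUnion.2 ⟨r, mem_univ _, hx⟩⟩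

def IsSymmBollobasSystem (A : Fin m → Fin d → Finset γ) : Prop :=
  ∀ i j, i < j → ∃ p q, p < q ∧ (A i p ∩ A j q).Nonempty ∧ (A j p ∩ A i q).Nonempty

variable {κ : Type*} [DecidableEq κ] (X : κ → Finset γ) (A : Fin m → Fin d → Finset γ) (l : κ)

abbrev BlockArrangement (k : κ) : Type _ :=
  (X k ∩ support A : Finset γ) ↪ Fin (Fintype.card (X k ∩ support A : Finset γ) + (d - 1))

noncomputable def blockEvent (i : Fin m) (k : κ) : Finset (BlockArrangement X A k) :=
  {f | if k = l then IsColorSorted (fun y : (X k ∩ support A : Finset γ) => partColor (A i) y) f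
    else IsBarSeparated (fun y : (X k ∩ support A : Finset γ) => partColor (A i) y) f}

theorem card_blockArrangement_le (hpart : ∀ i, Pairwise (Disjoint on A i)) (i : Fin m) (k : κ) :
    Fintype.card (BlockArrangement X A k) ≤
      Nat.multinomial univ (fun r => #(A i r ∩ X k)) *
        (if k = l then 1
          else (Fintype.card (X k ∩ support A : Finset γ) + (d - 1)).choose (d - 1)) *
          #(blockEvent X A l i k) := by
  have hfiber : ∀ r, #(A i r ∩ X k) =
      #{y : (X k ∩ support A : Finset γ) | partColor (A i) y = some r} := fun r => by
    rw [card_filter_partColor_eq_some (hpart i), ← inter_assoc,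
      inter_eq_left.2 (inter_subset_left.trans (subset_support A i r))]
  simp_rw [hfiber]
  by_cases hk : k = l
  · subst hk
    simp only [blockEvent, if_true, mul_one]
    exact card_embedding_le_multinomial_mul_card_isColorSorted _ _
  · simp only [blockEvent, hk, if_false]
    exact card_embedding_le_multinomial_mul_choose_mul_card_isBarSeparated _

theorem disjoint_piFinset_blockEvent [Fintype κ] (hcover : ∀ i r, A i r ⊆ univ.biUnion X)
    (hpart : ∀ i, Pairwise (Disjoint on A i)) (hsymm : IsSymmBollobasSystem A) {i j : Fin m}
    (hij : i < j) :
    Disjoint (Fintype.piFinset (blockEvent X A l i)) (Fintype.piFinset (blockEvent X A l j)) := by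
  have hlocate : ∀ {z i r}, z ∈ A i r → ∃ k, z ∈ X k ∩ support A := fun {z i r} hz => by
    obtain ⟨k, -, hk⟩ := mem_biUnion.1 (hcover i r hz)
    exact ⟨k, mem_inter.2 ⟨hk, subset_support A i r hz⟩⟩
  have hcol : ∀ {i k} {y : (X k ∩ support A : Finset γ)} {r},
      ↑y ∈ A i r → partColor (A i) y = some r := (partColor_eq_some_iff (hpart _)).2
  refine disjoint_left.2 fun ω hωi hωj => ?_
  have hevent : ∀ {i}, ω ∈ Fintype.piFinset (blockEvent X A l i) → ∀ k,
      if k = l then IsColorSorted (fun y : (X k ∩ support A : Finset γ) => partColor (A i) y) (ω k)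
      else IsBarSeparated (fun y : (X k ∩ support A : Finset γ) => partColor (A i) y) (ω k) :=
    fun h k => by simpa [blockEvent] using Fintype.mem_piFinset.1 h k
  obtain ⟨p, q, hpq, ⟨x, hx⟩, ⟨y, hy⟩⟩ := hsymm i j hij
  obtain ⟨hxi, hxj⟩ := mem_inter.1 hx
  obtain ⟨hyj, hyi⟩ := mem_inter.1 hy
  obtain ⟨kx, hkx⟩ := hlocate hxi
  obtain ⟨ky, hky⟩ := hlocate hyj
  by_cases hxl : kx = l
  · by_cases hyl : ky = l
    · obtain rfl : ky = kx := hyl.trans hxl.symm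
      have hi := hevent hωi ky
      have hj := hevent hωj ky
      rw [if_pos hyl] at hi hj
      exact IsColorSorted.not_lt_of_swap (x := ⟨x, hkx⟩) (y := ⟨y, hky⟩) hi hj
        (hcol hxi) (hcol hxj) (hcol hyi) (hcol hyj) hpq
    · have hi := hevent hωi ky
      have hj := hevent hωj ky
      rw [if_neg hyl] at hi hj
      exact hpq.ne (hj.eq_of_eq_some (x := ⟨y, hky⟩) hi (hcol hyj) (hcol hyi))
  · have hi := hevent hωi kx
    have hj := hevent hωj kx
    rw [if_neg hxl] at hi hj
    exact hpq.ne (hi.eq_of_eq_some (x := ⟨x, hkx⟩) hj (hcol hxi) (hcol hxj))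

theorem sum_inv_prod_multinomial_le [Fintype κ] (hcover : ∀ i r, A i r ⊆ univ.biUnion X)
    (hpart : ∀ i, Pairwise (Disjoint on A i)) (hsymm : IsSymmBollobasSystem A) :
    ∑ i, (∏ k, (Nat.multinomial univ (fun r => #(A i r ∩ X k)) : ℚ))⁻¹ ≤
      (∏ k, ((#(X k ∩ support A) + d - 1).choose (d - 1) : ℚ)) /
        ((#(X l ∩ support A) + d - 1).choose (d - 1) : ℚ) := by
  have hbound := sum_inv_prod_le_prod_of_le_mul (K := ℚ) univ _ _ _ _
    (fun k => Fintype.card_pos_iff.2 (Function.Embedding.nonempty_of_card_le (by simp)))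
    (fun i _ k => card_blockArrangement_le X A l hpart i k)
    (sum_prod_card_le_prod_card univ (blockEvent X A l) fun i _ j _ hij =>
      hij.lt_or_gt.elim (disjoint_piFinset_blockEvent X A l hcover hpart hsymm)
        fun hji => (disjoint_piFinset_blockEvent X A l hcover hpart hsymm hji).symm)
  -- `s + d - 1` and `s + (d - 1)` differ only when `d = 0`, where both binomials are `1`.
  have hchoose : ∀ s, (s + (d - 1)).choose (d - 1) = (s + d - 1).choose (d - 1) := fun s => by
    rcases d with _ | d <;> simp
  refine hbound.trans_eq ((eq_div_iff (Nat.cast_ne_zero.2 (Nat.choose_pos (by omega)).ne')).2 ?_)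
  rw [← Fintype.prod_ite_eq' l fun k => (((#(X k ∩ support A) + d - 1).choose (d - 1) : ℕ) : ℚ),
    ← prod_mul_distrib]
  refine prod_congr rfl fun k _ => ?_
  split_ifs with hk <;> simp [hchoose]

end Bollobas

end SymmetricBollobas

theorem symmetric_bollobas_partitioned_general (n d e m : ℕ) (he : 0 < e)
    (X : Fin e → Finset ℕ)
    (hXcover : Finset.univ.biUnion X = Finset.Icc 1 n)
    (A : Fin m → Fin d → Finset ℕ)
    (hAsub : ∀ i r, A i r ⊆ Finset.Icc 1 n)
    (hAdisj : ∀ i, ∀ p q : Fin d, p ≠ q → Disjoint (A i p) (A i q))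
    (hsymm : ∀ i j : Fin m, i < j →
      ∃ p q : Fin d, p < q ∧
        ((A i p) ∩ (A j q)).Nonempty ∧ ((A j p) ∩ (A i q)).Nonempty) :
    ∑ i : Fin m, (∏ k : Fin e,
        ((Nat.multinomial Finset.univ
          fun r : Fin d => ((A i r) ∩ X k).card : ℕ) : ℚ))⁻¹
      ≤ Finset.inf' Finset.univ ⟨⟨0, he⟩, Finset.mem_univ _⟩
          (fun l : Fin e =>
            (∏ k : Fin e,
              ((((X k ∩ (Finset.univ.biUnion fun i : Fin m =>
                    Finset.univ.biUnion fun r : Fin d => A i r)).card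
                  + d - 1).choose (d - 1) : ℕ) : ℚ)) /
            ((((X l ∩ (Finset.univ.biUnion fun i : Fin m =>
                  Finset.univ.biUnion fun r : Fin d => A i r)).card
                + d - 1).choose (d - 1) : ℕ) : ℚ)) :=
  Finset.le_inf' _ _ fun l _ =>
    SymmetricBollobas.sum_inv_prod_multinomial_le X A l (fun i r => hXcover ▸ hAsub i r)
      (fun i p q => hAdisj i p q) hsymm

/-- **Theorem (symmetric Bollobás systems over a partitioned ground set).**
If `[n]` is the disjoint union of `X_1, …, X_e`, `d ≥ 2`, and
`{(A_i^{(1)}, …, A_i^{(d)})}_{1 ≤ i ≤ m}` is a symmetric Bollobás system of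
`d`-partitions of `[n]`, with `s_k = |X_k ∩ S|` where `S` is the support, then
`∑_i (∏_k multinomial(…))⁻¹ ≤ min_{l ∈ [e]} (∏_k C(s_k+d-1, d-1)) / C(s_l+d-1, d-1)`. -/
theorem symmetric_bollobas_partitioned (n d e m : ℕ) (hd : 2 ≤ d) (he : 0 < e)
    (X : Fin e → Finset ℕ)
    (hXdisj : ∀ k l : Fin e, k ≠ l → Disjoint (X k) (X l))
    (hXcover : Finset.univ.biUnion X = Finset.Icc 1 n)
    (A : Fin m → Fin d → Finset ℕ)
    (hAsub : ∀ i r, A i r ⊆ Finset.Icc 1 n)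
    (hAdisj : ∀ i, ∀ p q : Fin d, p ≠ q → Disjoint (A i p) (A i q))
    (hsymm : ∀ i j : Fin m, i < j →
      ∃ p q : Fin d, p < q ∧
        ((A i p) ∩ (A j q)).Nonempty ∧ ((A j p) ∩ (A i q)).Nonempty) :
    ∑ i : Fin m, (∏ k : Fin e,
        ((Nat.multinomial Finset.univ
          fun r : Fin d => ((A i r) ∩ X k).card : ℕ) : ℚ))⁻¹
      ≤ Finset.inf' Finset.univ ⟨⟨0, he⟩, Finset.mem_univ _⟩
          (fun l : Fin e =>
            (∏ k : Fin e,
              ((((X k ∩ (Finset.univ.biUnion fun i : Fin m =>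
                    Finset.univ.biUnion fun r : Fin d => A i r)).card
                  + d - 1).choose (d - 1) : ℕ) : ℚ)) /
            ((((X l ∩ (Finset.univ.biUnion fun i : Fin m =>
                  Finset.univ.biUnion fun r : Fin d => A i r)).card
                + d - 1).choose (d - 1) : ℕ) : ℚ)) :=
  symmetric_bollobas_partitioned_general n d e m he X hXcover A hAsub hAdisj hsymm
end

section
/- Let d ≥ 2 and suppose [n] is the disjoint union of sets X_1,…,X_e. Let D = {(A_i^{(1)},…,A_i^{(d)})}_{1≤i≤m} be a weak Bollobás system of d-partitions of [n]. Let S = ⋃_{i=1}^m ⋃_{r=1}^d A_i^{(r)} and s_k = |S ∩ X_k| for k ∈ [e]. Then ∑_{i=1}^m ( ∏_{k=1}^e binom(∑_{r=1}^d |A_i^{(r)} ∩ X_k|; |A_i^{(1)} ∩ X_k|,…,|A_i^{(d)} ∩ X_k|) )^{-1} ≤ ∏_{k=1}^e binom(s_k + d - 1, d - 1). -/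
open Finset

private lemma fact_mul_prod (b : ℕ) : ∀ u : ℕ,
    Nat.factorial b * ∏ j ∈ range u, (b + 1 + j) = Nat.factorial (b + u)
  | 0 => by simp
  | (u+1) => by
      rw [prod_range_succ, ← mul_assoc, fact_mul_prod b u, ← Nat.add_assoc,
        Nat.factorial_succ (b + u)]
      ring

private lemma sum_wgt_fin (d : ℕ) : ∀ (n : ℕ) (a : Fin d → ℕ),
    ∑ f : Fin n → Fin d, ∏ r, Nat.factorial (a r + (univ.filter fun x => f x = r).card)
    = (∏ r, Nat.factorial (a r)) * ∏ j ∈ range n, ((∑ r, a r) + d + j) := by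
  intro n
  induction n with
  | zero => intro a; simp
  | succ n ih =>
    intro a
    rw [← Equiv.sum_comp (Fin.consEquiv fun _ => Fin d)
      (fun f => ∏ r, Nat.factorial (a r + (univ.filter fun x => f x = r).card))]
    rw [Fintype.sum_prod_type]
    have hfib : ∀ (v : Fin d) (f : Fin n → Fin d) (r : Fin d),
        (univ.filter fun x : Fin (n+1) => (Fin.cons v f : Fin (n+1) → Fin d) x = r).card
          = (if v = r then 1 else 0) + (univ.filter fun x : Fin n => f x = r).card := by
      intro v f r
      rw [card_filter, card_filter, Fin.sum_univ_succ]
      simp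
    have hinner : ∀ v : Fin d,
        ∑ f : Fin n → Fin d, ∏ r, Nat.factorial
            (a r + (univ.filter fun x : Fin (n+1) => (Fin.consEquiv fun _ => Fin d) (v, f) x = r).card)
        = (∏ r, Nat.factorial ((fun r => a r + if v = r then 1 else 0) r))
            * ∏ j ∈ range n, ((∑ r, (a r + if v = r then 1 else 0)) + d + j) := by
      intro v
      rw [← ih (fun r => a r + if v = r then 1 else 0)]
      apply Finset.sum_congr rfl
      intro f _
      apply Finset.prod_congr rfl
      intro r _
      congr 1
      show a r + (univ.filter fun x : Fin (n+1) => (Fin.cons v f : Fin (n+1) → Fin d) x = r).card = _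
      rw [hfib v f r]
      ring
    simp only [hinner]
    have h1 : ∀ v : Fin d, (∑ r, (a r + if v = r then 1 else 0)) = (∑ r, a r) + 1 := by
      intro v
      rw [Finset.sum_add_distrib]
      congr 1
      simp
    have h2 : ∀ v : Fin d, (∏ r, Nat.factorial (a r + if v = r then 1 else 0))
        = (a v + 1) * ∏ r, Nat.factorial (a r) := by
      intro v
      have : ∀ r : Fin d, Nat.factorial (a r + if v = r then 1 else 0)
          = (if v = r then a r + 1 else 1) * Nat.factorial (a r) := by
        intro r
        by_cases h : v = r <;> simp [h, Nat.factorial_succ]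
      simp only [this, Finset.prod_mul_distrib]
      congr 1
      simp
    simp only [h1, h2]
    rw [prod_range_succ']
    have hd' : ∀ j, (∑ r, a r) + 1 + d + j = (∑ r, a r) + d + (j + 1) := by intro j; ring
    simp only [hd']
    have hsum : (∑ i : Fin d, (a i + 1)) = (∑ r, a r) + d := by
      rw [Finset.sum_add_distrib]; simp
    have hstep : ∑ i : Fin d, (a i + 1) * ∏ r : Fin d, (a r).factorial
        = ((∑ r, a r) + d) * ∏ r : Fin d, (a r).factorial := by
      rw [← Finset.sum_mul, hsum]
    rw [← Finset.sum_mul, hstep]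
    ring

private lemma sum_wgt (d : ℕ) {β : Type} [Fintype β] [DecidableEq β] (a : Fin d → ℕ) :
    ∑ f : β → Fin d, ∏ r, Nat.factorial (a r + (univ.filter fun x => f x = r).card)
    = (∏ r, Nat.factorial (a r)) * ∏ j ∈ range (Fintype.card β), ((∑ r, a r) + d + j) := by
  classical
  rw [← sum_wgt_fin d (Fintype.card β) a]
  apply Fintype.sum_equiv (Equiv.arrowCongr (Fintype.equivFin β) (Equiv.refl (Fin d)))
  intro f
  apply Finset.prod_congr rfl
  intro r _
  congr 2
  apply Finset.card_bij' (fun x _ => (Fintype.equivFin β) x)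
    (fun y _ => (Fintype.equivFin β).symm y) <;> simp [Equiv.arrowCongr]

private lemma compat_sum (d : ℕ) (s : Finset ℕ) (B : Fin d → Finset ℕ)
    (hBs : ∀ r, B r ⊆ s)
    (hBd : ∀ p q : Fin d, p ≠ q → Disjoint (B p) (B q)) :
    ∑ f ∈ univ.filter (fun f : ↥s → Fin d => ∀ (r : Fin d) (x : ↥s), ↑x ∈ B r → f x = r),
        ∏ r, Nat.factorial ((univ.filter fun x => f x = r).card)
    = (∏ r, Nat.factorial (B r).card)
        * ∏ j ∈ range (s.card - ∑ r, (B r).card), ((∑ r, (B r).card) + d + j) := by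
  classical
  set U : Finset ℕ := s \ univ.biUnion B with hUdef
  have hmemU : ∀ x : ℕ, x ∈ U ↔ x ∈ s ∧ ¬ ∃ r, x ∈ B r := by
    intro x; simp [hUdef, mem_sdiff, mem_biUnion]
  have huniq : ∀ (x : ℕ) (h : ∃ r, x ∈ B r) (r : Fin d), x ∈ B r → h.choose = r := by
    intro x h r hx
    by_contra hne
    exact (Finset.disjoint_left.mp (hBd _ _ hne) h.choose_spec) hx
  have hUs : ∀ y : ↥U, (y : ℕ) ∈ s := fun y => ((hmemU y).mp y.2).1
  set res : (↥s → Fin d) → (↥U → Fin d) := fun f y => f ⟨(y : ℕ), hUs y⟩ with hres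
  set ext : (↥U → Fin d) → (↥s → Fin d) := fun g x =>
    if h : ∃ r, (x : ℕ) ∈ B r then h.choose
    else g ⟨(x : ℕ), (hmemU _).mpr ⟨x.2, h⟩⟩ with hext
  have hext_compat : ∀ g (r : Fin d) (x : ↥s), ↑x ∈ B r → ext g x = r := by
    intro g r x hx
    have h : ∃ r', (x : ℕ) ∈ B r' := ⟨r, hx⟩
    simp only [hext]
    rw [dif_pos h]
    exact huniq _ h r hx
  have hres_ext : ∀ g, res (ext g) = g := by
    intro g; funext y
    have hy : ¬ ∃ r, (y : ℕ) ∈ B r := ((hmemU y).mp y.2).2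
    simp only [hres, hext]
    rw [dif_neg hy]
  have hext_res : ∀ f : ↥s → Fin d, (∀ (r : Fin d) (x : ↥s), ↑x ∈ B r → f x = r) →
      ext (res f) = f := by
    intro f hf; funext x
    simp only [hext, hres]
    by_cases h : ∃ r, (x : ℕ) ∈ B r
    · rw [dif_pos h]
      exact (hf h.choose x h.choose_spec).symm
    · rw [dif_neg h]
  -- fibre count for extended functions
  have hfib : ∀ g (r : Fin d),
      (univ.filter fun x : ↥s => ext g x = r).card
        = (B r).card + (univ.filter fun y : ↥U => g y = r).card := by
    intro g r
    rw [← Finset.card_filter_add_card_filter_not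
      (s := univ.filter fun x : ↥s => ext g x = r) (p := fun x : ↥s => (x : ℕ) ∈ B r)]
    congr 1
    · rw [Finset.filter_filter]
      refine Finset.card_bij' (fun (x : ↥s) _ => (x : ℕ))
        (fun y hy => (⟨y, hBs r hy⟩ : ↥s)) ?_ ?_ ?_ ?_
      · intro x hx
        exact (mem_filter.mp hx).2.2
      · intro y hy
        exact mem_filter.mpr ⟨mem_univ _, hext_compat g r ⟨y, hBs r hy⟩ hy, hy⟩
      · intro x hx
        exact Subtype.ext rfl
      · intro y hy
        rfl
    · rw [Finset.filter_filter]
      have hUmem : ∀ (x : ↥s), ext g x = r → ¬ (x : ℕ) ∈ B r → (x : ℕ) ∈ U := by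
        intro x hx1 hx2
        refine (hmemU _).mpr ⟨x.2, ?_⟩
        rintro ⟨r', hr'⟩
        have h' : ext g x = r' := hext_compat g r' x hr'
        rw [hx1] at h'
        exact hx2 (h' ▸ hr')
      refine Finset.card_bij'
        (fun (x : ↥s) (hx : x ∈ univ.filter fun x : ↥s => ext g x = r ∧ ¬ (x : ℕ) ∈ B r) =>
          (⟨(x : ℕ), hUmem x (mem_filter.mp hx).2.1 (mem_filter.mp hx).2.2⟩ : ↥U))
        (fun (y : ↥U) _ => (⟨(y : ℕ), hUs y⟩ : ↥s)) ?_ ?_ ?_ ?_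
      · intro x hx
        obtain ⟨-, h1, h2⟩ := mem_filter.mp hx
        refine mem_filter.mpr ⟨mem_univ _, ?_⟩
        have e1 : g (⟨(x : ℕ), hUmem x h1 h2⟩ : ↥U)
            = res (ext g) (⟨(x : ℕ), hUmem x h1 h2⟩ : ↥U) := by rw [hres_ext]
        have e2 : res (ext g) (⟨(x : ℕ), hUmem x h1 h2⟩ : ↥U) = ext g x := by
          exact congrArg (ext g) (Subtype.ext rfl)
        exact e1.trans (e2.trans h1)
      · intro y hy
        have hgy : g y = r := (mem_filter.mp hy).2
        have hynB : ¬ ∃ r', (y : ℕ) ∈ B r' := ((hmemU _).mp y.2).2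
        refine mem_filter.mpr ⟨mem_univ _, ?_, fun hc => hynB ⟨r, hc⟩⟩
        have e3 : ext g (⟨(y : ℕ), hUs y⟩ : ↥s)
            = g ⟨(y : ℕ), (hmemU _).mpr ⟨hUs y, hynB⟩⟩ := dif_neg hynB
        have e4 : g (⟨(y : ℕ), (hmemU _).mpr ⟨hUs y, hynB⟩⟩ : ↥U) = g y :=
          congrArg g (Subtype.ext rfl)
        exact e3.trans (e4.trans hgy)
      · intro x hx
        exact Subtype.ext rfl
      · intro y hy
        exact Subtype.ext rfl
  -- the bijection between compatible functions and functions on U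
  have key : ∑ g : ↥U → Fin d, ∏ r, Nat.factorial
        ((B r).card + (univ.filter fun y : ↥U => g y = r).card)
      = ∑ f ∈ univ.filter (fun f : ↥s → Fin d =>
          ∀ (r : Fin d) (x : ↥s), ↑x ∈ B r → f x = r),
          ∏ r, Nat.factorial ((univ.filter fun x => f x = r).card) := by
    apply Finset.sum_nbij' ext res
    · intro g _
      exact mem_filter.mpr ⟨mem_univ _, fun r x hx => hext_compat g r x hx⟩
    · intro f _
      exact mem_univ _
    · intro g _
      exact hres_ext g
    · intro f hf
      exact hext_res f (mem_filter.mp hf).2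
    · intro g _
      apply Finset.prod_congr rfl
      intro r _
      rw [hfib g r]
  rw [← key, sum_wgt]
  congr 1
  have hsub : univ.biUnion B ⊆ s := by
    intro x hx
    obtain ⟨r, _, hr⟩ := mem_biUnion.mp hx
    exact hBs r hr
  have hcardU : Fintype.card ↥U = s.card - ∑ r, (B r).card := by
    rw [Fintype.card_coe, hUdef, card_sdiff_of_subset hsub, card_biUnion]
    intro p _ q _ hpq
    exact hBd p q hpq
  rw [hcardU]


/-- **Theorem (weak Bollobás systems over a partitioned ground set).**
If `[n]` is the disjoint union of `X_1, …, X_e`, `d ≥ 2`, and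
`{(A_i^{(1)}, …, A_i^{(d)})}_{1 ≤ i ≤ m}` is a weak Bollobás system of
`d`-partitions of `[n]`, with `s_k = |S ∩ X_k|` where `S` is the support, then
`∑_i (∏_k multinomial(…))⁻¹ ≤ ∏_k C(s_k + d - 1, d - 1)`. -/
theorem weak_bollobas_partitioned (n d e m : ℕ) (hd : 2 ≤ d)
    (X : Fin e → Finset ℕ)
    (hXdisj : ∀ k l : Fin e, k ≠ l → Disjoint (X k) (X l))
    (hXcover : Finset.univ.biUnion X = Finset.Icc 1 n)
    (A : Fin m → Fin d → Finset ℕ)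
    (hAsub : ∀ i r, A i r ⊆ Finset.Icc 1 n)
    (hAdisj : ∀ i, ∀ p q : Fin d, p ≠ q → Disjoint (A i p) (A i q))
    (hweak : ∀ i j : Fin m, i < j →
      ∃ p q : Fin d, p < q ∧
        (((A i p) ∩ (A j q)).Nonempty ∨ ((A j p) ∩ (A i q)).Nonempty)) :
    ∑ i : Fin m, (∏ k : Fin e,
        ((Nat.multinomial Finset.univ
          fun r : Fin d => ((A i r) ∩ X k).card : ℕ) : ℚ))⁻¹
      ≤ ∏ k : Fin e,
          (((((Finset.univ.biUnion fun i : Fin m =>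
                Finset.univ.biUnion fun r : Fin d => A i r) ∩ X k).card
              + d - 1).choose (d - 1) : ℕ) : ℚ) := by
  classical
  obtain ⟨d', rfl⟩ : ∃ d', d = d' + 1 := ⟨d - 1, by omega⟩
  set S : Finset ℕ := Finset.univ.biUnion fun i : Fin m =>
    Finset.univ.biUnion fun r : Fin (d' + 1) => A i r with hS
  have hSsub : ∀ i r, A i r ⊆ S := by
    intro i r x hx
    exact mem_biUnion.mpr ⟨i, mem_univ _, mem_biUnion.mpr ⟨r, mem_univ _, hx⟩⟩
  clear_value S
  have hBsub : ∀ i k (r : Fin (d' + 1)), A i r ∩ X k ⊆ S ∩ X k := by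
    intro i k r x hx
    rw [mem_inter] at hx ⊢
    exact ⟨hSsub i r hx.1, hx.2⟩
  have hBdisj : ∀ i k, ∀ p q : Fin (d' + 1), p ≠ q →
      Disjoint (A i p ∩ X k) (A i q ∩ X k) := fun i k p q h =>
    (hAdisj i p q h).mono inter_subset_left inter_subset_left
  -- total weight for part k
  have F1 : ∀ k : Fin e, (∑ f : ↥(S ∩ X k) → Fin (d' + 1),
      ∏ r, Nat.factorial ((Finset.univ.filter fun x => f x = r).card))
      = (S ∩ X k).card.factorial * ((S ∩ X k).card + d').choose d' := by
    intro k
    have h0 := sum_wgt (d' + 1) (β := ↥(S ∩ X k)) (fun _ => 0)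
    simp only [zero_add, Nat.factorial_zero, Finset.prod_const_one, one_mul,
      Finset.sum_const_zero, Fintype.card_coe] at h0
    rw [h0]
    apply Nat.eq_of_mul_eq_mul_left (Nat.factorial_pos d')
    calc d'.factorial * ∏ j ∈ range (S ∩ X k).card, (d' + 1 + j)
        = Nat.factorial (d' + (S ∩ X k).card) := fact_mul_prod d' (S ∩ X k).card
      _ = Nat.factorial ((S ∩ X k).card + d') := by rw [Nat.add_comm]
      _ = ((S ∩ X k).card + d').choose d' * d'.factorial
            * (((S ∩ X k).card + d') - d').factorial :=
          (Nat.choose_mul_factorial_mul_factorial (Nat.le_add_left d' (S ∩ X k).card)).symm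
      _ = ((S ∩ X k).card + d').choose d' * d'.factorial
            * (S ∩ X k).card.factorial := by rw [Nat.add_sub_cancel]
      _ = d'.factorial * ((S ∩ X k).card.factorial * ((S ∩ X k).card + d').choose d') := by
          ring
  -- lower bound for the compatible sum
  have F3 : ∀ (i : Fin m) (k : Fin e),
      (S ∩ X k).card.factorial ≤
        Nat.multinomial Finset.univ (fun r : Fin (d' + 1) => (A i r ∩ X k).card)
          * (∑ f ∈ Finset.univ.filter (fun f : ↥(S ∩ X k) → Fin (d' + 1) =>
        ∀ (r : Fin (d' + 1)) (x : ↥(S ∩ X k)), ↑x ∈ A i r ∩ X k → f x = r),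
      ∏ r, Nat.factorial ((Finset.univ.filter fun x => f x = r).card)) := by
    intro i k
    have hc := compat_sum (d' + 1) (S ∩ X k) (fun r => A i r ∩ X k)
      (hBsub i k) (hBdisj i k)
    rw [hc]
    have hble : (∑ r : Fin (d' + 1), (A i r ∩ X k).card) ≤ (S ∩ X k).card := by
      rw [← card_biUnion (fun p _ q _ h => hBdisj i k p q h)]
      exact card_le_card (biUnion_subset.mpr fun r _ => hBsub i k r)
    obtain ⟨u, hcu⟩ : ∃ u, (S ∩ X k).card
        = (∑ r : Fin (d' + 1), (A i r ∩ X k).card) + u :=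
      ⟨(S ∩ X k).card - (∑ r : Fin (d' + 1), (A i r ∩ X k).card),
        (Nat.add_sub_cancel' hble).symm⟩
    rw [hcu, Nat.add_sub_cancel_left]
    calc Nat.factorial ((∑ r : Fin (d' + 1), (A i r ∩ X k).card) + u)
        = (∑ r : Fin (d' + 1), (A i r ∩ X k).card).factorial
            * ∏ j ∈ range u, ((∑ r : Fin (d' + 1), (A i r ∩ X k).card) + 1 + j) :=
          (fact_mul_prod _ u).symm
      _ ≤ (∑ r : Fin (d' + 1), (A i r ∩ X k).card).factorial
            * ∏ j ∈ range u, ((∑ r : Fin (d' + 1), (A i r ∩ X k).card) + (d' + 1) + j) := by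
          apply mul_le_mul_right
          apply Finset.prod_le_prod'
          intro j _
          exact Nat.add_le_add_right
            (Nat.add_le_add_left (Nat.succ_le_succ (Nat.zero_le d')) _) _
      _ = ((∏ r : Fin (d' + 1), Nat.factorial (A i r ∩ X k).card)
            * Nat.multinomial Finset.univ (fun r : Fin (d' + 1) => (A i r ∩ X k).card))
            * ∏ j ∈ range u, ((∑ r : Fin (d' + 1), (A i r ∩ X k).card) + (d' + 1) + j) := by
          rw [Nat.multinomial_spec]
      _ = Nat.multinomial Finset.univ (fun r : Fin (d' + 1) => (A i r ∩ X k).card)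
            * ((∏ r : Fin (d' + 1), Nat.factorial (A i r ∩ X k).card)
              * ∏ j ∈ range u, ((∑ r : Fin (d' + 1), (A i r ∩ X k).card) + (d' + 1) + j)) := by
          ring
  -- disjointness of compatible families
  have hkey : ∀ i1 i2 : Fin m, ∀ p q : Fin (d' + 1), p ≠ q →
      (A i1 p ∩ A i2 q).Nonempty →
      ∀ F : (k : Fin e) → (↥(S ∩ X k) → Fin (d' + 1)),
      (∀ k, ∀ (r : Fin (d' + 1)) (x : ↥(S ∩ X k)), ↑x ∈ A i1 r ∩ X k → F k x = r) →
      (∀ k, ∀ (r : Fin (d' + 1)) (x : ↥(S ∩ X k)), ↑x ∈ A i2 r ∩ X k → F k x = r) →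
      False := by
    rintro i1 i2 p q hpq ⟨x, hx⟩ F H1 H2
    rw [mem_inter] at hx
    have hxX : x ∈ Finset.univ.biUnion X := by
      rw [hXcover]; exact hAsub i1 p hx.1
    obtain ⟨k, -, hk⟩ := mem_biUnion.mp hxX
    have hxsk : x ∈ S ∩ X k := mem_inter.mpr ⟨hSsub i1 p hx.1, hk⟩
    have e1 := H1 k p ⟨x, hxsk⟩ (mem_inter.mpr ⟨hx.1, hk⟩)
    have e2 := H2 k q ⟨x, hxsk⟩ (mem_inter.mpr ⟨hx.2, hk⟩)
    rw [e1] at e2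
    exact hpq e2
  have hdisj : Set.PairwiseDisjoint
      ((Finset.univ : Finset (Fin m)) : Set (Fin m))
      (fun i => Fintype.piFinset (fun k : Fin e =>
        Finset.univ.filter (fun f : ↥(S ∩ X k) → Fin (d' + 1) =>
          ∀ (r : Fin (d' + 1)) (x : ↥(S ∩ X k)), ↑x ∈ A i r ∩ X k → f x = r))) := by
    intro i _ j _ hij
    simp only [Function.onFun]
    rw [Finset.disjoint_left]
    intro F hFi hFj
    have Hi : ∀ k, ∀ (r : Fin (d' + 1)) (x : ↥(S ∩ X k)), ↑x ∈ A i r ∩ X k → F k x = r :=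
      fun k => (mem_filter.mp (Fintype.mem_piFinset.mp hFi k)).2
    have Hj : ∀ k, ∀ (r : Fin (d' + 1)) (x : ↥(S ∩ X k)), ↑x ∈ A j r ∩ X k → F k x = r :=
      fun k => (mem_filter.mp (Fintype.mem_piFinset.mp hFj k)).2
    rcases lt_or_gt_of_ne hij with h | h
    · obtain ⟨p, q, hpq, hne | hne⟩ := hweak i j h
      · exact hkey i j p q hpq.ne hne F Hi Hj
      · exact hkey j i p q hpq.ne hne F Hj Hi
    · obtain ⟨p, q, hpq, hne | hne⟩ := hweak j i h
      · exact hkey j i p q hpq.ne hne F Hj Hi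
      · exact hkey i j p q hpq.ne hne F Hi Hj
  -- main counting bound
  have F4 : (∑ i : Fin m, ∏ k : Fin e, (∑ f ∈ Finset.univ.filter (fun f : ↥(S ∩ X k) → Fin (d' + 1) =>
        ∀ (r : Fin (d' + 1)) (x : ↥(S ∩ X k)), ↑x ∈ A i r ∩ X k → f x = r),
      ∏ r, Nat.factorial ((Finset.univ.filter fun x => f x = r).card)))
      ≤ ∏ k : Fin e, (∑ f : ↥(S ∩ X k) → Fin (d' + 1),
      ∏ r, Nat.factorial ((Finset.univ.filter fun x => f x = r).card)) := by
    calc (∑ i : Fin m, ∏ k : Fin e, (∑ f ∈ Finset.univ.filter (fun f : ↥(S ∩ X k) → Fin (d' + 1) =>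
        ∀ (r : Fin (d' + 1)) (x : ↥(S ∩ X k)), ↑x ∈ A i r ∩ X k → f x = r),
      ∏ r, Nat.factorial ((Finset.univ.filter fun x => f x = r).card)))
        = ∑ i : Fin m, ∑ F ∈ Fintype.piFinset (fun k : Fin e =>
            Finset.univ.filter (fun f : ↥(S ∩ X k) → Fin (d' + 1) =>
              ∀ (r : Fin (d' + 1)) (x : ↥(S ∩ X k)), ↑x ∈ A i r ∩ X k → f x = r)),
            ∏ k, ∏ r, Nat.factorial ((Finset.univ.filter fun x => F k x = r).card) := by
          apply Finset.sum_congr rfl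
          intro i _
          exact Finset.prod_univ_sum _ _
      _ = ∑ F ∈ Finset.univ.biUnion (fun i : Fin m => Fintype.piFinset (fun k : Fin e =>
            Finset.univ.filter (fun f : ↥(S ∩ X k) → Fin (d' + 1) =>
              ∀ (r : Fin (d' + 1)) (x : ↥(S ∩ X k)), ↑x ∈ A i r ∩ X k → f x = r))),
            ∏ k, ∏ r, Nat.factorial ((Finset.univ.filter fun x => F k x = r).card) :=
          (Finset.sum_biUnion hdisj).symm
      _ ≤ ∑ F ∈ (Finset.univ : Finset ((k : Fin e) → (↥(S ∩ X k) → Fin (d' + 1)))),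
            ∏ k, ∏ r, Nat.factorial ((Finset.univ.filter fun x => F k x = r).card) :=
          Finset.sum_le_sum_of_subset (Finset.subset_univ _)
      _ = ∏ k : Fin e, (∑ f : ↥(S ∩ X k) → Fin (d' + 1),
      ∏ r, Nat.factorial ((Finset.univ.filter fun x => f x = r).card)) := by
          have h := Finset.prod_univ_sum
            (fun k : Fin e => (Finset.univ : Finset (↥(S ∩ X k) → Fin (d' + 1))))
            (fun k f => ∏ r, Nat.factorial ((Finset.univ.filter fun x => f x = r).card))
          rw [Fintype.piFinset_univ] at h
          exact h.symm
  -- pass to ℚ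
  have hmultpos : ∀ (i : Fin m) (k : Fin e),
      0 < Nat.multinomial Finset.univ (fun r : Fin (d' + 1) => (A i r ∩ X k).card) :=
    fun i k => Nat.multinomial_pos _ _
  have step1 : ∀ (i : Fin m) (k : Fin e),
      ((Nat.multinomial Finset.univ
          (fun r : Fin (d' + 1) => (A i r ∩ X k).card) : ℕ) : ℚ)⁻¹
        ≤ ((∑ f ∈ Finset.univ.filter (fun f : ↥(S ∩ X k) → Fin (d' + 1) =>
        ∀ (r : Fin (d' + 1)) (x : ↥(S ∩ X k)), ↑x ∈ A i r ∩ X k → f x = r),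
      ∏ r, Nat.factorial ((Finset.univ.filter fun x => f x = r).card) : ℕ) : ℚ) / ((S ∩ X k).card.factorial : ℚ) := by
    intro i k
    rw [inv_eq_one_div, div_le_div_iff₀ (by exact_mod_cast hmultpos i k)
      (by exact_mod_cast Nat.factorial_pos (S ∩ X k).card)]
    rw [one_mul]
    have h := F3 i k
    rw [Nat.mul_comm] at h
    exact_mod_cast h
  calc ∑ i : Fin m, (∏ k : Fin e,
        ((Nat.multinomial Finset.univ
          fun r : Fin (d' + 1) => ((A i r) ∩ X k).card : ℕ) : ℚ))⁻¹
      = ∑ i : Fin m, ∏ k : Fin e,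
        (((Nat.multinomial Finset.univ
          fun r : Fin (d' + 1) => ((A i r) ∩ X k).card : ℕ) : ℚ))⁻¹ := by
        apply Finset.sum_congr rfl
        intro i _
        rw [Finset.prod_inv_distrib]
    _ ≤ ∑ i : Fin m, ∏ k : Fin e,
          ((∑ f ∈ Finset.univ.filter (fun f : ↥(S ∩ X k) → Fin (d' + 1) =>
        ∀ (r : Fin (d' + 1)) (x : ↥(S ∩ X k)), ↑x ∈ A i r ∩ X k → f x = r),
      ∏ r, Nat.factorial ((Finset.univ.filter fun x => f x = r).card) : ℕ) : ℚ) / ((S ∩ X k).card.factorial : ℚ) := by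
        apply Finset.sum_le_sum
        intro i _
        apply Finset.prod_le_prod
        · intro k _
          positivity
        · intro k _
          exact step1 i k
    _ = (∑ i : Fin m, ∏ k : Fin e, ((∑ f ∈ Finset.univ.filter (fun f : ↥(S ∩ X k) → Fin (d' + 1) =>
        ∀ (r : Fin (d' + 1)) (x : ↥(S ∩ X k)), ↑x ∈ A i r ∩ X k → f x = r),
      ∏ r, Nat.factorial ((Finset.univ.filter fun x => f x = r).card) : ℕ) : ℚ))
          / ∏ k : Fin e, ((S ∩ X k).card.factorial : ℚ) := by
        rw [Finset.sum_div]
        apply Finset.sum_congr rfl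
        intro i _
        rw [Finset.prod_div_distrib]
    _ ≤ (∏ k : Fin e, ((∑ f : ↥(S ∩ X k) → Fin (d' + 1),
      ∏ r, Nat.factorial ((Finset.univ.filter fun x => f x = r).card) : ℕ) : ℚ))
          / ∏ k : Fin e, ((S ∩ X k).card.factorial : ℚ) := by
        have hden : (0:ℚ) < ∏ k : Fin e, ((S ∩ X k).card.factorial : ℚ) := by
          apply Finset.prod_pos
          intro k _
          exact_mod_cast Nat.factorial_pos _
        apply (div_le_div_iff_of_pos_right hden).mpr
        exact_mod_cast F4
    _ = ∏ k : Fin e,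
          (((((S ∩ X k).card + (d' + 1) - 1).choose ((d' + 1) - 1) : ℕ)) : ℚ) := by
        rw [← Finset.prod_div_distrib]
        apply Finset.prod_congr rfl
        intro k _
        rw [F1 k]
        have h1 : ((S ∩ X k).card + (d' + 1) - 1) = (S ∩ X k).card + d' := by
          rw [← Nat.add_assoc]
          simp
        have h2 : (d' + 1 - 1) = d' := by simp
        rw [h1, h2]
        push_cast
        rw [mul_comm]
        have hne : (((S ∩ X k).card.factorial : ℕ) : ℚ) ≠ 0 :=
          Nat.cast_ne_zero.mpr (Nat.factorial_pos _).ne'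
        exact mul_div_cancel_right₀ _ hne
end

section
/- Let d ≥ 2 and suppose [n] is the disjoint union of sets X_1,…,X_e. Let D = {(A_i^{(1)},…,A_i^{(d)})}_{1≤i≤m} be any family of d-partitions of [n]. Let S = ⋃_{i=1}^m ⋃_{r=1}^d A_i^{(r)}, S_k = S ∩ X_k and s_k = |S_k| for k ∈ [e]. Let G(S) be the set of all permutations σ of S such that σ(S_k) = S_k for each k ∈ [e], and for σ ∈ G(S) let I_σ = { i ∈ [m] : σ(A_i^{(1)} ∩ X_k) < σ(A_i^{(2)} ∩ X_k) < ⋯ < σ(A_i^{(d)} ∩ X_k) for every k ∈ [e] }. Then ∑_{i=1}^m ∏_{k=1}^e ( s_k! · binom(∑_{r=1}^d |A_i^{(r)} ∩ X_k|; |A_i^{(1)} ∩ X_k|,…,|A_i^{(d)} ∩ X_k|)^{-1} ) = ∑_{σ∈G(S)} |I_σ|. -/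
/-!
Fix `i` and encode the `d`-partition `A_i` by the labelling `ℓ x = (k, r)` of `S`, where `k` is
the part `X_k` containing `x` and `r` the block `A_i^{(r)}` containing `x` (or `none`). A
permutation `σ` lies in `G(S)` and satisfies the order condition for `i` exactly when `ℓ ∘ σ⁻¹`
has the same colours as `ℓ` and is *sorted*: inside each colour, larger labels sit on larger
elements. Every labelling with the fibre sizes of `ℓ` is of the form `ℓ ∘ σ⁻¹` for exactly
`∏_b |ℓ⁻¹(b)|!` permutations, and a sorted labelling is determined by the set of its labelled
elements in each colour, which can be any set of the right size. Hence the number of such `σ` is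
`∏_k binom(s_k, a_k) (s_k - a_k)! ∏_r a_{k,r}! = ∏_k s_k! / binom(a_k; a_{k,1}, …, a_{k,d})`,
and summing over `i` is the double count of the pairs `(σ, i)` with `i ∈ I_σ`.
-/

open Finset Equiv Function
open scoped Classical Nat

section Labelings

variable {α β : Type*} [Fintype α] [DecidableEq α] [Fintype β] [DecidableEq β]

theorem card_perm_comp_eq_prod_factorial {f g : α → β}
    (h : ∀ b, #{x | g x = b} = #{x | f x = b}) :
    #{σ : Perm α | g ∘ σ = f} = ∏ b, (#{x | f x = b})! := by
  obtain ⟨τ, hτ⟩ : ∃ τ : Perm α, g ∘ τ = f :=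
    ⟨ofFiberEquiv fun b => Fintype.equivOfCardEq (by simp only [Fintype.card_subtype, h]),
      funext (ofFiberEquiv_map _)⟩
  simp only [← Fintype.card_subtype]
  rw [← DomMulAct.stabilizer_card f]
  refine Fintype.card_congr (subtypeEquiv (Equiv.mulLeft τ⁻¹) fun σ => ?_)
  rw [← hτ, Equiv.coe_mulLeft, Perm.coe_mul, ← comp_assoc, comp_assoc g, Perm.coe_inv,
    self_comp_symm, comp_id]

theorem card_perm_filter_comp_symm (P : (α → β) → Prop) [DecidablePred P] (f : α → β) :
    #{σ : Perm α | P (f ∘ σ.symm)} =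
      #{g | P g ∧ ∀ b, #{x | g x = b} = #{x | f x = b}} * ∏ b, (#{x | f x = b})! := by
  have hfiber (σ : Perm α) (b : β) : #{x | f (σ.symm x) = b} = #{x | f x = b} :=
    card_equiv σ.symm (by simp)
  rw [card_eq_sum_card_fiberwise (f := fun σ : Perm α => f ∘ σ.symm)
    (t := {g | P g ∧ ∀ b, #{x | g x = b} = #{x | f x = b}}) (by simp_all [Set.MapsTo]),
    ← smul_eq_mul, ← sum_const]
  refine sum_congr rfl fun g hg => ?_
  rw [mem_filter] at hg
  rw [← card_perm_comp_eq_prod_factorial hg.2.2]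
  congr 1
  ext σ
  simp only [mem_filter, mem_univ, true_and, comp_symm_eq, eq_comm (a := f)]
  refine ⟨And.right, ?_⟩
  rintro rfl
  simpa [comp_assoc] using hg.2.1

end Labelings

theorem card_filter_fst_eq {α ι κ : Type*} [Fintype α] [DecidableEq ι] [DecidableEq κ]
    [Fintype κ] (ℓ : α → ι × Option κ) (k : ι) :
    #{x | (ℓ x).1 = k} = #{x | ℓ x = (k, none)} + ∑ r, #{x | ℓ x = (k, some r)} := by
  rw [card_eq_sum_card_fiberwise (f := fun x => (ℓ x).2) (t := univ) (by simp),
    Fintype.sum_option]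
  simp only [filter_filter, Prod.ext_iff]

section ColouredLabelings

variable {α ι κ : Type*} [Fintype α] [DecidableEq α] [DecidableEq ι] [DecidableEq κ]

def labelSet (g : α → ι × Option κ) (k : ι) (R : Finset κ) : Finset α :=
  R.biUnion fun r => {x | g x = (k, some r)}

@[simp]
theorem mem_labelSet {g : α → ι × Option κ} {k : ι} {R : Finset κ} {x : α} :
    x ∈ labelSet g k R ↔ ∃ r ∈ R, g x = (k, some r) := by
  simp [labelSet]

theorem card_labelSet (g : α → ι × Option κ) (k : ι) (R : Finset κ) :
    #(labelSet g k R) = ∑ r ∈ R, #{x | g x = (k, some r)} :=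
  card_biUnion fun r _ s _ hrs => disjoint_filter.2 fun x _ hr hs => hrs (by simp_all)

end ColouredLabelings

theorem Finset.eq_of_card_eq_of_forall_lt_sdiff {α : Type*} [Preorder α] [DecidableEq α]
    {s t u : Finset α} (hs : s ⊆ u) (ht : t ⊆ u)
    (hsu : ∀ y ∈ s, ∀ z ∈ u \ s, y < z) (htu : ∀ y ∈ t, ∀ z ∈ u \ t, y < z)
    (hst : #s = #t) : s = t := by
  have : s ⊆ t ∨ t ⊆ s := by
    by_contra! h
    obtain ⟨⟨y, hys, hyt⟩, ⟨z, hzt, hzs⟩⟩ := And.imp not_subset.1 not_subset.1 h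
    exact (hsu y hys z (mem_sdiff.2 ⟨ht hzt, hzs⟩)).asymm
      (htu z hzt y (mem_sdiff.2 ⟨hs hys, hyt⟩))
  rcases this with h | h
  · exact eq_of_subset_of_card_le h hst.ge
  · exact (eq_of_subset_of_card_le h hst.le).symm

section SortedLabeling

variable {α ι κ : Type*} [LinearOrder α] [LinearOrder κ]

/-- The labels come from an order isomorphism of `W` with the lexicographic sum of the
`Fin (a r)`. -/
theorem exists_sorted_option_labeling [Fintype α] [Fintype κ] (W : Finset α) (a : κ → ℕ)
    (ha : ∑ r, a r = #W) :
    ∃ h : α → Option κ, (∀ x, h x = none ↔ x ∉ W) ∧ (∀ r, #{x | h x = some r} = a r) ∧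
      ∀ r s, r < s → ∀ x y, h x = some r → h y = some s → x < y := by
  let e : W ≃o Σₗ r, Fin (a r) := (W.orderIsoOfFin rfl).symm.trans
    (Fintype.orderIsoFinOfCardEq (Σₗ r, Fin (a r)) (by simp [Fintype.card_lex, ha]))
  refine ⟨fun x => if hx : x ∈ W then some (e ⟨x, hx⟩).1 else none, fun x => ?_, fun r => ?_,
    fun r s hrs x y hx hy => ?_⟩
  · by_cases hx : x ∈ W <;> simp [hx]
  · rw [← Fintype.card_fin (a r), ← Finset.card_univ]
    refine (card_bij (fun j _ => (e.symm (toLex ⟨r, j⟩) : α)) (fun j _ => ?_) ?_ ?_).symm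
    · simp only [mem_filter, mem_univ, true_and, coe_mem, dif_pos, Subtype.coe_eta,
        OrderIso.apply_symm_apply]
      rfl
    · intro j _ j' _ hj
      simpa using hj
    · intro x hx
      simp only [mem_filter, mem_univ, true_and] at hx
      split_ifs at hx with hxW
      rcases hq : e ⟨x, hxW⟩ with ⟨r', j⟩
      obtain rfl : r' = r := by simpa [hq] using hx
      exact ⟨j, mem_univ _, congrArg Subtype.val (e.symm_apply_eq.2 hq.symm)⟩
  · dsimp only at hx hy
    split_ifs at hx hy with hxW hyW
    have : e ⟨x, hxW⟩ < e ⟨y, hyW⟩ := Sigma.Lex.lt_def.2 (Or.inl (by simp_all))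
    exact e.lt_iff_lt.1 this

/-- `g x = (k, some r)` gives `x` colour `k` and label `r`; `(k, none)` leaves `x` unlabelled. -/
def IsSorted (g : α → ι × Option κ) : Prop :=
  ∀ k r s, r < s → ∀ x y, g x = (k, some r) → g y = (k, some s) → x < y

variable [Fintype α] [DecidableEq ι] [Fintype κ]

theorem IsSorted.lt_of_mem_labelSet {g : α → ι × Option κ} (hg : IsSorted g) {k : ι} {r : κ}
    {y z : α} (hy : y ∈ labelSet g k {q | q ≤ r})
    (hz : z ∈ labelSet g k univ \ labelSet g k {q | q ≤ r}) : y < z := by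
  obtain ⟨p, hpr, hp⟩ := mem_labelSet.1 hy
  obtain ⟨⟨q, -, hq⟩, hzr⟩ := And.imp_left mem_labelSet.1 (mem_sdiff.1 hz)
  have hrq : r < q := lt_of_not_ge fun hqr => hzr (mem_labelSet.2 ⟨q, by simpa using hqr, hq⟩)
  exact hg k p q ((mem_filter.1 hpr).2.trans_lt hrq) y z hp hq

/-- Within each colour the elements with label `≤ r` form an initial segment of the labelled
elements, whose size is fixed by the fibre sizes. -/
theorem IsSorted.eq {g g' : α → ι × Option κ} (hg : IsSorted g) (hg' : IsSorted g')
    (hfst : ∀ x, (g x).1 = (g' x).1) (hsupp : ∀ k, labelSet g k univ = labelSet g' k univ)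
    (hcard : ∀ k r, #{x | g x = (k, some r)} = #{x | g' x = (k, some r)}) : g = g' := by
  have hmono (h : α → ι × Option κ) (k : ι) (r : κ) :
      labelSet h k {q | q ≤ r} ⊆ labelSet h k univ :=
    biUnion_subset_biUnion_of_subset_left _ (subset_univ _)
  have hseg (k : ι) (r : κ) : labelSet g k {q | q ≤ r} = labelSet g' k {q | q ≤ r} :=
    eq_of_card_eq_of_forall_lt_sdiff (hmono g k r) (hsupp k ▸ hmono g' k r)
      (fun y hy z hz => hg.lt_of_mem_labelSet hy hz)
      (hsupp k ▸ fun y hy z hz => hg'.lt_of_mem_labelSet hy hz)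
      (by simp only [card_labelSet, hcard])
  have key {h h' : α → ι × Option κ}
      (hhh' : ∀ k r, labelSet h k {q | q ≤ r} = labelSet h' k {q | q ≤ r})
      {x : α} {k : ι} {r : κ} (hx : h x = (k, some r)) : h' x = (k, some r) := by
    obtain ⟨q, hqr, hq⟩ := mem_labelSet.1 (hhh' k r ▸ mem_labelSet.2 ⟨r, by simp, hx⟩)
    obtain ⟨p, hpq, hp⟩ := mem_labelSet.1 ((hhh' k q).symm ▸ mem_labelSet.2 ⟨q, by simp, hq⟩)
    obtain rfl : p = r := by simp_all
    simp only [mem_filter, mem_univ, true_and] at hqr hpq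
    rwa [le_antisymm hqr hpq] at hq
  funext x
  rcases hx : g x with ⟨k, _ | r⟩ <;> rcases hx' : g' x with ⟨k', _ | r'⟩
  · simpa [hx, hx'] using hfst x
  · rw [← hx, key (fun k r => (hseg k r).symm) hx']
  all_goals rw [← hx', key hseg hx]

theorem exists_isSorted_labelSet_eq (ℓ : α → ι × Option κ) (W : ι → Finset α)
    (hWsub : ∀ k, ∀ x ∈ W k, (ℓ x).1 = k)
    (hWcard : ∀ k, #(W k) = ∑ r, #{x | ℓ x = (k, some r)}) :
    ∃ g : α → ι × Option κ,
      (((∀ x, (g x).1 = (ℓ x).1) ∧ IsSorted g) ∧ ∀ b, #{x | g x = b} = #{x | ℓ x = b}) ∧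
        ∀ k, labelSet g k univ = W k := by
  choose h hnone hcard hsorted using fun k =>
    exists_sorted_option_labeling (W k) (fun r => #{x | ℓ x = (k, some r)}) (hWcard k).symm
  have hW (k : ι) (x : α) : x ∈ W k ↔ (ℓ x).1 = k ∧ h (ℓ x).1 x ≠ none := by
    refine ⟨fun hx => ?_, fun ⟨hk, hx⟩ => by simpa [hnone, hk] using hx⟩
    obtain rfl := hWsub k x hx
    simpa [hnone] using hx
  let g (x : α) : ι × Option κ := ((ℓ x).1, h (ℓ x).1 x)
  have hsome (k : ι) (r : κ) : #{x | g x = (k, some r)} = #{x | ℓ x = (k, some r)} := by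
    rw [← hcard k r]
    congr 1
    ext x
    simp only [mem_filter, mem_univ, true_and, g, Prod.mk.injEq]
    refine ⟨fun ⟨hk, hx⟩ => hk ▸ hx, fun hx => ?_⟩
    obtain ⟨hk, -⟩ := (hW k x).1 (by simpa [hx] using (hnone k x).not)
    exact ⟨hk, by rwa [hk]⟩
  refine ⟨g, ⟨⟨fun x => rfl, fun k r s hrs x y hx hy => ?_⟩, fun ⟨k, o⟩ => ?_⟩, fun k => ?_⟩
  · simp only [g, Prod.mk.injEq] at hx hy
    obtain ⟨rfl, hx⟩ := hx
    obtain ⟨hk, hy⟩ := hy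
    rw [hk] at hy
    exact hsorted _ r s hrs x y hx hy
  · cases o with
    | none =>
      have hg := card_filter_fst_eq g k
      simp only [hsome] at hg
      exact Nat.add_right_cancel (hg.symm.trans (card_filter_fst_eq ℓ k))
    | some r => exact hsome k r
  · ext x
    simp [g, hW, Option.ne_none_iff_exists']

theorem card_sorted_labelings [Fintype ι] (ℓ : α → ι × Option κ) :
    #{g | ((∀ x, (g x).1 = (ℓ x).1) ∧ IsSorted g) ∧ ∀ b, #{x | g x = b} = #{x | ℓ x = b}} =
      ∏ k, (#{x | (ℓ x).1 = k}).choose (∑ r, #{x | ℓ x = (k, some r)}) := by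
  simp only [← card_powersetCard, ← Fintype.card_piFinset]
  refine card_nbij (fun g k => labelSet g k univ) (fun g hg => ?_) (fun g hg g' hg' hgg' => ?_)
    (fun W hW => ?_)
  · simp only [coe_filter, mem_univ, true_and, Set.mem_ofPred_eq] at hg
    simp only [Fintype.coe_piFinset, Set.mem_pi, Set.mem_univ, mem_coe, mem_powersetCard,
      forall_const]
    refine fun k => ⟨fun x hx => ?_, by simp [card_labelSet, hg.2]⟩
    obtain ⟨r, -, hr⟩ := mem_labelSet.1 hx
    simp [← hg.1.1 x, hr]
  · simp only [coe_filter, mem_univ, true_and, Set.mem_ofPred_eq] at hg hg'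
    exact hg.1.2.eq hg'.1.2 (fun x => (hg.1.1 x).trans (hg'.1.1 x).symm) (congrFun hgg')
      (fun k r => (hg.2 _).trans (hg'.2 _).symm)
  · simp only [Fintype.coe_piFinset, Set.mem_pi, Set.mem_univ, mem_coe, mem_powersetCard,
      forall_const] at hW
    obtain ⟨g, hg, hgW⟩ := exists_isSorted_labelSet_eq ℓ W
      (fun k x hx => by simpa using (hW k).1 hx) (fun k => (hW k).2)
    exact ⟨g, by simpa using hg, funext hgW⟩

theorem card_sorted_perm_mul_prod_multinomial [Fintype ι] (ℓ : α → ι × Option κ) :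
    #{σ : Perm α | (∀ x, (ℓ (σ x)).1 = (ℓ x).1) ∧
        ∀ k r s, r < s → ∀ x y, ℓ x = (k, some r) → ℓ y = (k, some s) → σ x < σ y} *
      ∏ k, Nat.multinomial univ (fun r => #{x | ℓ x = (k, some r)}) =
      ∏ k, (#{x | (ℓ x).1 = k})! := by
  have hsorted (σ : Perm α) : ((∀ x, (ℓ (σ x)).1 = (ℓ x).1) ∧
        ∀ k r s, r < s → ∀ x y, ℓ x = (k, some r) → ℓ y = (k, some s) → σ x < σ y) ↔
      (∀ x, (ℓ (σ.symm x)).1 = (ℓ x).1) ∧ IsSorted (ℓ ∘ σ.symm) := by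
    simp only [comp_apply, IsSorted]
    refine and_congr ⟨fun h x => by simpa using (h (σ.symm x)).symm,
        fun h x => by simpa using (h (σ x)).symm⟩
      ⟨fun h k r s hrs x y hx hy => by simpa using h k r s hrs _ _ hx hy,
        fun h k r s hrs x y hx hy => by simpa using h k r s hrs (σ x) (σ y) (by simpa) (by simpa)⟩
  have hcount : #{σ : Perm α | (∀ x, (ℓ (σ x)).1 = (ℓ x).1) ∧
        ∀ k r s, r < s → ∀ x y, ℓ x = (k, some r) → ℓ y = (k, some s) → σ x < σ y} =
      (∏ k, (#{x | (ℓ x).1 = k}).choose (∑ r, #{x | ℓ x = (k, some r)})) *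
        ∏ b, (#{x | ℓ x = b})! := by
    rw [← card_sorted_labelings, ← card_perm_filter_comp_symm]
    congr 1
    ext σ
    simp only [mem_filter, mem_univ, true_and]
    exact hsorted σ
  rw [hcount, Fintype.prod_prod_type]
  simp only [Fintype.prod_option]
  rw [← prod_mul_distrib, ← prod_mul_distrib]
  refine prod_congr rfl fun k _ => ?_
  rw [card_filter_fst_eq ℓ k, ← Nat.add_choose_mul_factorial_mul_factorial,
    ← Nat.multinomial_spec]
  ring

end SortedLabeling

noncomputable def blockIndex {α κ : Type*} (B : κ → Finset α) (x : α) : Option κ :=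
  if h : ∃ r, x ∈ B r then some h.choose else none

theorem blockIndex_eq_some_iff {α κ : Type*} {B : κ → Finset α} (hB : Pairwise (Disjoint on B))
    {x : α} {r : κ} : blockIndex B x = some r ↔ x ∈ B r := by
  unfold blockIndex
  split_ifs with h
  · exact Option.some_inj.trans ⟨fun hr => hr ▸ h.choose_spec,
      fun hx => hB.eq (not_disjoint_iff.2 ⟨x, h.choose_spec, hx⟩)⟩
  · simpa using fun hx => h ⟨r, hx⟩

theorem card_filter_val_mem {α : Type*} [DecidableEq α] (S T : Finset α) :
    #{x : S | ↑x ∈ T} = #(S ∩ T) := by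
  rw [← card_map (Embedding.subtype _)]
  congr 1
  ext x
  simp [and_comm]

theorem card_perm_filter_ordered_mul_prod_multinomial {α ι κ : Type*} [LinearOrder α]
    [Fintype ι] [DecidableEq ι] [LinearOrder κ] [Fintype κ] (S : Finset α) (X : ι → Finset α)
    (hX : Pairwise (Disjoint on X)) (hSX : ∀ x ∈ S, ∃ k, x ∈ X k) (A : κ → Finset α)
    (hA : Pairwise (Disjoint on A)) (hAS : ∀ r, A r ⊆ S) :
    #{σ : Perm S | (∀ k, ∀ a : S, (a : α) ∈ X k → (σ a : α) ∈ X k) ∧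
        ∀ k r₁ r₂, r₁ < r₂ → ∀ a b : S, (a : α) ∈ A r₁ ∩ X k → (b : α) ∈ A r₂ ∩ X k →
          (σ a : α) < (σ b : α)} *
      ∏ k, Nat.multinomial univ (fun r => #(A r ∩ X k)) = ∏ k, (#(S ∩ X k))! := by
  choose c hc using fun x : S => hSX x x.2
  have hc_iff (x : S) (k : ι) : c x = k ↔ ↑x ∈ X k :=
    ⟨fun h => h ▸ hc x, fun hk => by_contra fun hne => disjoint_left.1 (hX hne) (hc x) hk⟩
  let ℓ (x : S) : ι × Option κ := (c x, blockIndex A x)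
  have hℓ (x : S) (k : ι) (r : κ) : ℓ x = (k, some r) ↔ ↑x ∈ A r ∩ X k := by
    simp [ℓ, hc_iff, blockIndex_eq_some_iff hA, and_comm]
  have hfib (k : ι) (r : κ) : #{x | ℓ x = (k, some r)} = #(A r ∩ X k) := by
    simp only [hℓ, card_filter_val_mem, inter_eq_right.2 (inter_subset_left.trans (hAS r))]
  have hcol (k : ι) : #{x | (ℓ x).1 = k} = #(S ∩ X k) := by
    simp only [ℓ, hc_iff, card_filter_val_mem]
  have hcount := card_sorted_perm_mul_prod_multinomial ℓ
  simp only [hfib, hcol] at hcount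
  rw [← hcount]
  congr 2
  ext σ
  simp only [mem_filter, mem_univ, true_and, hℓ, Subtype.coe_lt_coe]
  refine and_congr ⟨fun h x => (hc_iff _ _).2 (h _ x (hc x)), fun h k a ha => ?_⟩ Iff.rfl
  rw [← hc_iff] at ha ⊢
  exact (h a).trans ha

theorem double_counting_lemma_general (n d e m : ℕ)
    (X : Fin e → Finset ℕ)
    (hXdisj : ∀ k l : Fin e, k ≠ l → Disjoint (X k) (X l))
    (hXcover : Finset.univ.biUnion X = Finset.Icc 1 n)
    (A : Fin m → Fin d → Finset ℕ)
    (hAsub : ∀ i r, A i r ⊆ Finset.Icc 1 n)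
    (hAdisj : ∀ i, ∀ p q : Fin d, p ≠ q → Disjoint (A i p) (A i q))
    (S : Finset ℕ)
    (hS : S = Finset.univ.biUnion fun i : Fin m =>
      Finset.univ.biUnion fun r : Fin d => A i r) :
    ∑ i : Fin m, ∏ k : Fin e,
        ((((S ∩ X k).card).factorial : ℚ) *
          ((Nat.multinomial Finset.univ
            fun r : Fin d => ((A i r) ∩ X k).card : ℕ) : ℚ)⁻¹)
      =
    ∑ σ ∈ Finset.univ.filter (fun σ : Equiv.Perm {x : ℕ // x ∈ S} =>
        ∀ k : Fin e, ∀ a : {x : ℕ // x ∈ S}, (a : ℕ) ∈ X k → ((σ a : ℕ) ∈ X k)),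
      ((Finset.univ.filter (fun i : Fin m =>
          ∀ k : Fin e, ∀ r₁ r₂ : Fin d, r₁ < r₂ →
            ∀ a b : {x : ℕ // x ∈ S},
              (a : ℕ) ∈ (A i r₁) ∩ X k → (b : ℕ) ∈ (A i r₂) ∩ X k →
                (σ a : ℕ) < (σ b : ℕ))).card : ℚ) := by
  have hAS (i : Fin m) (r : Fin d) : A i r ⊆ S := fun x hx => hS ▸ by simpa using ⟨i, r, hx⟩
  have hSX (x : ℕ) (hx : x ∈ S) : ∃ k, x ∈ X k := by
    obtain ⟨i, r, hx⟩ : ∃ i r, x ∈ A i r := by simpa [hS] using hx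
    simpa [← hXcover] using hAsub i r hx
  simp only [natCast_card_filter]
  rw [sum_comm]
  refine sum_congr rfl fun i _ => ?_
  rw [← natCast_card_filter]
  rw [prod_mul_distrib, prod_inv_distrib, ← div_eq_mul_inv,
    div_eq_iff (prod_ne_zero_iff.2 fun k _ => Nat.cast_ne_zero.2 (Nat.multinomial_pos _ _).ne'),
    filter_filter, ← Nat.cast_prod,
    ← card_perm_filter_ordered_mul_prod_multinomial S X hXdisj hSX (A i) (hAdisj i) (hAS i)]
  push_cast
  -- the two filters differ only in the `Decidable` instances of their predicates
  congr 3
  ext σ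
  simp only [mem_filter]

/-- **Lemma (double counting).** Let `[n]` be the disjoint union of `X_1, …, X_e`,
`d ≥ 2`, and `{(A_i^{(1)}, …, A_i^{(d)})}_{1 ≤ i ≤ m}` a family of `d`-partitions
of `[n]`. Let `S` be the support, `S_k = S ∩ X_k`, `s_k = |S_k|`. Let `G(S)` be
the permutations of `S` keeping each `S_k` invariant, and for `σ ∈ G(S)` let
`I_σ` be the set of `i ∈ [m]` with
`σ(A_i^{(1)} ∩ X_k) < σ(A_i^{(2)} ∩ X_k) < ⋯ < σ(A_i^{(d)} ∩ X_k)` for all `k`.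
Then `∑_i ∏_k (s_k! · multinomial(…)⁻¹) = ∑_{σ ∈ G(S)} |I_σ|`. -/
theorem double_counting_lemma (n d e m : ℕ) (hd : 2 ≤ d)
    (X : Fin e → Finset ℕ)
    (hXdisj : ∀ k l : Fin e, k ≠ l → Disjoint (X k) (X l))
    (hXcover : Finset.univ.biUnion X = Finset.Icc 1 n)
    (A : Fin m → Fin d → Finset ℕ)
    (hAsub : ∀ i r, A i r ⊆ Finset.Icc 1 n)
    (hAdisj : ∀ i, ∀ p q : Fin d, p ≠ q → Disjoint (A i p) (A i q))
    (S : Finset ℕ)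
    (hS : S = Finset.univ.biUnion fun i : Fin m =>
      Finset.univ.biUnion fun r : Fin d => A i r) :
    ∑ i : Fin m, ∏ k : Fin e,
        ((((S ∩ X k).card).factorial : ℚ) *
          ((Nat.multinomial Finset.univ
            fun r : Fin d => ((A i r) ∩ X k).card : ℕ) : ℚ)⁻¹)
      =
    ∑ σ ∈ Finset.univ.filter (fun σ : Equiv.Perm {x : ℕ // x ∈ S} =>
        ∀ k : Fin e, ∀ a : {x : ℕ // x ∈ S}, (a : ℕ) ∈ X k → ((σ a : ℕ) ∈ X k)),
      ((Finset.univ.filter (fun i : Fin m =>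
          ∀ k : Fin e, ∀ r₁ r₂ : Fin d, r₁ < r₂ →
            ∀ a b : {x : ℕ // x ∈ S},
              (a : ℕ) ∈ (A i r₁) ∩ X k → (b : ℕ) ∈ (A i r₂) ∩ X k →
                (σ a : ℕ) < (σ b : ℕ))).card : ℚ) :=
  double_counting_lemma_general n d e m X hXdisj hXcover A hAsub hAdisj S hS
end

section
/- Let d ≥ 2 and let D = {(A_i^{(1)},…,A_i^{(d)})}_{1≤i≤m} be a skew Bollobás system of d-partitions of [n] such that A_i^{(1)} < A_i^{(2)} < ⋯ < A_i^{(d)} for every i ∈ [m], and let s = |⋃_{i=1}^m ⋃_{r=1}^d A_i^{(r)}|. Then m ≤ binom(s + d - 1, d - 1). -/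
/-!
Attach to each partition `B = (B₁, …, B_d)` its rank profile: for `r < d - 1`, the number of
points of the support `S` lying weakly below some element of `B₁ ∪ ⋯ ∪ B_{r+1}`. The profile is
a weakly increasing sequence of length `d - 1` with values in `{0, …, s}`, and there are
`C(s + d - 1, d - 1)` of those. If `i < j` and `x ∈ A_i^{(p)} ∩ A_j^{(q)}` with `p < q`, then `x`
is counted in the `p`-th entry of the profile of `A_i`, while everything counted in the `p`-th entry
of the profile of `A_j` lies strictly below `x ∈ A_j^{(q)}`; so distinct members of the system
have distinct profiles.
-/

open Finset

section RankProfile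

variable {α : Type*} [LinearOrder α] {d : ℕ}

def rankProfile (S : Finset α) (B : Fin d → Finset α) (r : ℕ) : ℕ :=
  #{x ∈ S | ∃ q : Fin d, (q : ℕ) ≤ r ∧ ∃ y ∈ B q, x ≤ y}

theorem rankProfile_le_card (S : Finset α) (B : Fin d → Finset α) (r : ℕ) :
    rankProfile S B r ≤ #S :=
  card_filter_le _ _

theorem rankProfile_monotone (S : Finset α) (B : Fin d → Finset α) :
    Monotone (rankProfile S B) := by
  intro r₁ r₂ hr
  refine card_le_card (monotone_filter_right _ ?_)
  rintro x _ ⟨q, hq, hy⟩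
  exact ⟨q, hq.trans hr, hy⟩

theorem rankProfile_lt_of_mem_of_mem {S : Finset α} {B B' : Fin d → Finset α}
    (hord : ∀ r₁ r₂ : Fin d, r₁ < r₂ → ∀ x ∈ B' r₁, ∀ y ∈ B' r₂, x < y)
    {p q : Fin d} (hpq : p < q) {x : α} (hxS : x ∈ S) (hx : x ∈ B p) (hx' : x ∈ B' q) :
    rankProfile S B' p < rankProfile S B p := by
  have hbelow : ∀ z ∈ S, (∃ q' : Fin d, (q' : ℕ) ≤ p ∧ ∃ y ∈ B' q', z ≤ y) → z < x := by
    rintro z - ⟨q', hq', y, hy, hzy⟩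
    exact hzy.trans_lt (hord q' q (lt_of_le_of_lt (Fin.le_def.mpr hq') hpq) y hy x hx')
  have hsub : {z ∈ S | ∃ q' : Fin d, (q' : ℕ) ≤ p ∧ ∃ y ∈ B' q', z ≤ y} ⊆
      {z ∈ S | ∃ q' : Fin d, (q' : ℕ) ≤ p ∧ ∃ y ∈ B q', z ≤ y} := by
    intro z hz
    rw [mem_filter] at hz ⊢
    exact ⟨hz.1, p, le_rfl, x, hx, (hbelow z hz.1 hz.2).le⟩
  refine card_lt_card ((ssubset_iff_of_subset hsub).mpr ⟨x, ?_, ?_⟩)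
  · exact mem_filter.mpr ⟨hxS, p, le_rfl, x, hx, le_rfl⟩
  · exact fun hmem => lt_irrefl x (hbelow x hxS (mem_filter.mp hmem).2)

theorem rankProfile_injective_of_skew {ι : Type*} [LinearOrder ι] (S : Finset α)
    (A : ι → Fin d → Finset α) (hS : ∀ i r, A i r ⊆ S)
    (hskew : ∀ i j : ι, i < j → ∃ p q : Fin d, p < q ∧ (A i p ∩ A j q).Nonempty)
    (hord : ∀ i, ∀ r₁ r₂ : Fin d, r₁ < r₂ → ∀ x ∈ A i r₁, ∀ y ∈ A i r₂, x < y) :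
    Function.Injective fun i (r : Fin (d - 1)) => rankProfile S (A i) r := by
  have hlt : ∀ i j, i < j → ∃ r : Fin (d - 1), rankProfile S (A j) r < rankProfile S (A i) r := by
    intro i j hij
    obtain ⟨p, q, hpq, x, hx⟩ := hskew i j hij
    rw [mem_inter] at hx
    refine ⟨⟨p, by omega⟩, rankProfile_lt_of_mem_of_mem (hord j) hpq (hS i p hx.1) hx.1 hx.2⟩
  intro i j hij
  by_contra hne
  rcases lt_or_gt_of_ne hne with h | h
  · obtain ⟨r, hr⟩ := hlt i j h
    exact hr.ne (congrFun hij r).symm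
  · obtain ⟨r, hr⟩ := hlt j i h
    exact hr.ne (congrFun hij r)

end RankProfile

/-- Sorting identifies weakly increasing sequences with multisets, counted by `Sym.card_sym_eq_choose`. -/
theorem card_le_choose_of_injective_of_monotone {ι : Type*} [Fintype ι] {k N : ℕ}
    (F : ι → Fin k → ℕ) (hinj : Function.Injective F) (hmono : ∀ i, Monotone (F i))
    (hle : ∀ i r, F i r ≤ N) :
    Fintype.card ι ≤ (N + k).choose k := by
  let G : ι → Fin k → Fin (N + 1) := fun i r => ⟨F i r, Nat.lt_succ_of_le (hle i r)⟩
  have hGmono : ∀ i, Monotone (G i) := fun i _ _ h => Fin.mk_le_mk.mpr (hmono i h)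
  let toSym : ι → Sym (Fin (N + 1)) k := fun i => ⟨(List.ofFn (G i) : Multiset _), by simp⟩
  have htoSym : Function.Injective toSym := by
    intro i j hij
    have hperm : (List.ofFn (G i)).Perm (List.ofFn (G j)) :=
      Multiset.coe_eq_coe.mp (congrArg Subtype.val hij)
    have hG : G i = G j := List.ofFn_injective
      (hperm.eq_of_sortedLE (hGmono i).sortedLE_ofFn (hGmono j).sortedLE_ofFn)
    exact hinj (funext fun r => congrArg Fin.val (congrFun hG r))
  calc Fintype.card ι ≤ Fintype.card (Sym (Fin (N + 1)) k) := Fintype.card_le_of_injective _ htoSym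
    _ = (N + k).choose k := by rw [Sym.card_sym_eq_choose, Fintype.card_fin, Nat.add_right_comm,
      Nat.add_sub_cancel]

theorem skew_bollobas_ordered_count_general (d m : ℕ)
    (A : Fin m → Fin d → Finset ℕ)
    (hskew : ∀ i j : Fin m, i < j →
      ∃ p q : Fin d, p < q ∧ ((A i p) ∩ (A j q)).Nonempty)
    (hord : ∀ i, ∀ r₁ r₂ : Fin d, r₁ < r₂ →
      ∀ x ∈ A i r₁, ∀ y ∈ A i r₂, x < y) :
    m ≤ ((Finset.univ.biUnion fun i : Fin m =>
          Finset.univ.biUnion fun r : Fin d => A i r).card + d - 1).choose (d - 1) := by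
  set S := Finset.univ.biUnion fun i : Fin m => Finset.univ.biUnion fun r : Fin d => A i r
  have hS : ∀ i r, A i r ⊆ S := fun i r =>
    (subset_biUnion_of_mem (fun r => A i r) (mem_univ r)).trans
      (subset_biUnion_of_mem (fun i => univ.biUnion fun r => A i r) (mem_univ i))
  have hcount := card_le_choose_of_injective_of_monotone _
    (rankProfile_injective_of_skew S A hS hskew hord)
    (fun i => (rankProfile_monotone S (A i)).comp Fin.val_strictMono.monotone)
    (fun i r => rankProfile_le_card S (A i) r)
  rw [Fintype.card_fin] at hcount
  -- `s + d - 1` and `s + (d - 1)` differ when `d = 0`, where both binomials are `1`.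
  cases d <;> simpa using hcount

/-- **Proposition (upper bound of `N_skew(d,s)`).** If
`{(A_i^{(1)}, …, A_i^{(d)})}_{1 ≤ i ≤ m}` is a skew Bollobás system of
`d`-partitions of `[n]` with `A_i^{(1)} < A_i^{(2)} < ⋯ < A_i^{(d)}` for every
`i`, and `s` is the size of the support, then `m ≤ C(s + d - 1, d - 1)`. -/
theorem skew_bollobas_ordered_count (n d m : ℕ) (hd : 2 ≤ d)
    (A : Fin m → Fin d → Finset ℕ)
    (hAsub : ∀ i r, A i r ⊆ Finset.Icc 1 n)
    (hAdisj : ∀ i, ∀ p q : Fin d, p ≠ q → Disjoint (A i p) (A i q))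
    (hskew : ∀ i j : Fin m, i < j →
      ∃ p q : Fin d, p < q ∧ ((A i p) ∩ (A j q)).Nonempty)
    (hord : ∀ i, ∀ r₁ r₂ : Fin d, r₁ < r₂ →
      ∀ x ∈ A i r₁, ∀ y ∈ A i r₂, x < y) :
    m ≤ ((Finset.univ.biUnion fun i : Fin m =>
          Finset.univ.biUnion fun r : Fin d => A i r).card + d - 1).choose (d - 1) :=
  skew_bollobas_ordered_count_general d m A hskew hord
end
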